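/- arXiv:1406.0551 — 5 statements merged into one kernel-verified Lean document; each statement's English description precedes it below -/
import Mathlib

section
/- One-period duality gap with puts: Let n = 1 and 𝔓 = {s₀} × 𝔓₁ with 𝔓₁ ⊆ ℝ₊ a closed unbounded set. Let μ be a Borel probability measure on ℝ₊ with μ(𝔓₁) = 1 and ∫ x μ(dx) ≤ s₀. Let G : ℝ₊ → [−∞, ∞) be upper semi-continuous with |G(x)| ≤ K|x| for some constant K, and set β := limsup_{x→∞, x∈𝔓₁} G(x)/x ∈ [−∞, ∞). Then the put-based superhedging price satisfies V^{(p)}_{μ,𝔓}(G) = ∫ G(x) μ(dx) + β⁺ (s₀ − ∫ x μ(dx)), where β⁺ = max(β, 0). In particular, taking G(s₁) = (s₁ − K)⁺ gives V^{(p)}_{μ,𝔓}(G) = ∫(x − K)⁺ μ(dx) + (s₀ − ∫ x μ(dx)), and there is a duality gap whenever ∫ x μ(dx) < s₀. -/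
open MeasureTheory Set Filter Topology
open scoped ENNReal NNReal Classical

noncomputable section

namespace RobustFin

/-- Canonical path space: the values `S₀, S₁, …, S_n` of the asset. -/
abbrev Path (n : ℕ) := Fin (n + 1) → ℝ

/-- Paths starting at `s₀` with nonnegative coordinates: the canonical space `Ω`. -/
def Omega (n : ℕ) (s₀ : ℝ) : Set (Path n) := {ω | ω 0 = s₀ ∧ ∀ i, 0 ≤ ω i}

/-- The first `j` coordinates `S₁, …, S_j` of a path. -/
def restr {n : ℕ} (j : Fin n) (ω : Path n) : Fin j → ℝ :=
  fun i => ω ⟨(i : ℕ) + 1, by have h1 := i.isLt; have h2 := j.isLt; omega⟩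

/-- The coordinates `S₁, …, S_n` of a path. -/
def tailCoords {n : ℕ} (ω : Path n) : Fin n → ℝ := fun i => ω i.succ

/-- A dynamic trading strategy: bounded measurable positions `Δ_j(S₁,…,S_j)`. -/
structure Dyn (n : ℕ) where
  pos : (j : Fin n) → (Fin j → ℝ) → ℝ
  meas : ∀ j, Measurable (pos j)
  bdd : ∀ j, ∃ C, ∀ x, |pos j x| ≤ C

/-- No short selling: all dynamic positions are nonnegative. -/
def Dyn.Nonneg {n : ℕ} (D : Dyn n) : Prop := ∀ j x, 0 ≤ D.pos j x

/-- Gains from dynamic trading: `Σ_j Δ_j(S₁,…,S_j)(S_{j+1} − S_j)`. -/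
def Dyn.gains {n : ℕ} (D : Dyn n) (ω : Path n) : ℝ :=
  ∑ j : Fin n, D.pos j (restr j ω) * (ω j.succ - ω j.castSucc)

/-- A static option portfolio: a constant (cash) position plus a finite linear
combination of options with maturity indices `idx` and nonnegative strikes. -/
structure Static (n : ℕ) where
  const : ℝ
  m : ℕ
  coeff : Fin m → ℝ
  idx : Fin m → Fin n
  strike : Fin m → ℝ
  strike_nonneg : ∀ k, 0 ≤ strike k

/-- Payoff of the portfolio when the options are call options. -/
def Static.callPayoff {n : ℕ} (X : Static n) (ω : Path n) : ℝ :=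
  X.const + ∑ k, X.coeff k * max (ω (X.idx k).succ - X.strike k) 0

/-- Payoff of the portfolio when the options are put options. -/
def Static.putPayoff {n : ℕ} (X : Static n) (ω : Path n) : ℝ :=
  X.const + ∑ k, X.coeff k * max (X.strike k - ω (X.idx k).succ) 0

/-- Price of a static portfolio, given the unit option prices `c i K`;
this is the (unique) linear pricing functional determined by the prices. -/
def Static.price {n : ℕ} (X : Static n) (c : Fin n → ℝ → ℝ) : ℝ :=
  X.const + ∑ k, X.coeff k * c (X.idx k) (X.strike k)

/-- Expectation of a real payoff, valued in `EReal`, with the convention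
`∞ − ∞ = −∞` (in `EReal`, `⊤ - ⊤ = ⊥`). -/
def eexp {n : ℕ} (P : Measure (Path n)) (f : Path n → ℝ) : EReal :=
  ((∫⁻ ω, ENNReal.ofReal (f ω) ∂P : ℝ≥0∞) : EReal) -
    ((∫⁻ ω, ENNReal.ofReal (-(f ω)) ∂P : ℝ≥0∞) : EReal)

/-- The positive part of an extended real number, in `ℝ≥0∞`. -/
def posE (x : EReal) : ℝ≥0∞ := if x = ⊤ then ⊤ else ENNReal.ofReal x.toReal

/-- Expectation of an `EReal`-valued payoff, with the convention `∞ − ∞ = −∞`. -/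
def eexpE {n : ℕ} (P : Measure (Path n)) (f : Path n → EReal) : EReal :=
  ((∫⁻ ω, posE (f ω) ∂P : ℝ≥0∞) : EReal) - ((∫⁻ ω, posE (-(f ω)) ∂P : ℝ≥0∞) : EReal)

/-- A market calibrated model for the market with static payoffs `pay` (calls or puts),
prices `c` and prediction set `P`. -/
def Calibrated {n : ℕ} (pay : Static n → Path n → ℝ) (c : Fin n → ℝ → ℝ)
    (P : Set (Path n)) (Q : Measure (Path n)) : Prop :=
  IsProbabilityMeasure Q ∧ Q P = 1 ∧
    ∀ (X : Static n) (D : Dyn n), D.Nonneg →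
      eexp Q (fun ω => pay X ω + D.gains ω) ≤ (X.price c : EReal)

/-- A weak free lunch with vanishing risk. -/
def WFLVR {n : ℕ} (pay : Static n → Path n → ℝ) (c : Fin n → ℝ → ℝ)
    (P : Set (Path n)) : Prop :=
  ∃ (Xs : ℕ → Static n) (Ds : ℕ → Dyn n) (X : Static n) (D : Dyn n) (L : ℝ),
    (∀ k, (Ds k).Nonneg) ∧ D.Nonneg ∧
    (∀ ω ∈ P, Tendsto (fun k => pay (Xs k) ω + (Ds k).gains ω) atTop (nhds 0)) ∧
    (∀ k, ∀ ω ∈ P, pay X ω + D.gains ω ≤ pay (Xs k) ω + (Ds k).gains ω) ∧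
    Tendsto (fun k => (Xs k).price c) atTop (nhds L) ∧ L < 0

/-- A robust uniformly strong arbitrage. -/
def RobustArbitrage {n : ℕ} (pay : Static n → Path n → ℝ) (c : Fin n → ℝ → ℝ)
    (P : Set (Path n)) : Prop :=
  ∃ (X : Static n) (D : Dyn n), D.Nonneg ∧ X.price c < 0 ∧
    ∀ ω ∈ P, 0 ≤ pay X ω + D.gains ω

/-- The superhedging price of `G` over semi-static strategies (no short selling). -/
def V {n : ℕ} (pay : Static n → Path n → ℝ) (c : Fin n → ℝ → ℝ)
    (P : Set (Path n)) (G : Path n → EReal) : EReal :=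
  sInf {q : EReal | ∃ (X : Static n) (D : Dyn n), D.Nonneg ∧ q = (X.price c : EReal) ∧
    ∀ ω ∈ P, G ω ≤ ((pay X ω + D.gains ω : ℝ) : EReal)}

/-- The superhedging price of `G` when the dynamic positions may take both signs. -/
def Vsigned {n : ℕ} (pay : Static n → Path n → ℝ) (c : Fin n → ℝ → ℝ)
    (P : Set (Path n)) (G : Path n → EReal) : EReal :=
  sInf {q : EReal | ∃ (X : Static n) (D : Dyn n), q = (X.price c : EReal) ∧
    ∀ ω ∈ P, G ω ≤ ((pay X ω + D.gains ω : ℝ) : EReal)}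

/-- `Π_μ`: probability measures on the path space with marginals `δ_{s₀}, μ₁, …, μ_n`. -/
def PiMu {n : ℕ} (s₀ : ℝ) (μ : Fin n → Measure ℝ) : Set (Measure (Path n)) :=
  {π | IsProbabilityMeasure π ∧ π (Omega n s₀) = 1 ∧
       ∀ i : Fin n, π.map (fun ω => ω i.succ) = μ i}

/-- The coordinate process is a supermartingale in its natural filtration:
for every Borel `A ⊆ ℝ₊^j`, `∫ 1_A(S₁,…,S_j)(S_{j+1} − S_j) dπ ≤ 0`. -/
def IsSupermartingaleLaw {n : ℕ} (π : Measure (Path n)) : Prop :=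
  ∀ (j : Fin n) (A : Set (Fin j → ℝ)), MeasurableSet A →
    ∫ ω, Set.indicator A (fun _ => (1 : ℝ)) (restr j ω) * (ω j.succ - ω j.castSucc) ∂π ≤ 0

/-- `M⁻_μ`: calibrated supermartingale measures. -/
def MSet {n : ℕ} (s₀ : ℝ) (μ : Fin n → Measure ℝ) : Set (Measure (Path n)) :=
  {π ∈ PiMu s₀ μ | IsSupermartingaleLaw π}

/-- `M⁻_{μ,𝔓}`: calibrated supermartingale measures giving full mass to `P`. -/
def MSetP {n : ℕ} (s₀ : ℝ) (μ : Fin n → Measure ℝ) (P : Set (Path n)) :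
    Set (Measure (Path n)) :=
  {π ∈ MSet s₀ μ | π P = 1}

/-- Assumption A on the marginals. -/
def AssumptionA {n : ℕ} (s₀ : ℝ) (μ : Fin n → Measure ℝ) : Prop :=
  (∀ i, ∫ x, x ∂(μ i) ≤ s₀) ∧
  (∀ i j : Fin n, i ≤ j → ∫ x, x ∂(μ j) ≤ ∫ x, x ∂(μ i)) ∧
  (∀ φ : ℝ → ℝ, ConcaveOn ℝ Set.univ φ → Monotone φ → (∀ x, 0 ≤ φ x) →
    ∀ i j : Fin n, i ≤ j → ∫ x, φ x ∂(μ j) ≤ ∫ x, φ x ∂(μ i))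

/-- Condition C (i): each `c_i` is nonnegative, convex and nonincreasing on `ℝ₊`. -/
def CondC1 {n : ℕ} (c : Fin n → ℝ → ℝ) : Prop :=
  ∀ i, (∀ x, 0 ≤ x → 0 ≤ c i x) ∧ ConvexOn ℝ (Set.Ici 0) (c i) ∧ AntitoneOn (c i) (Set.Ici 0)

/-- Condition C (ii): `s₀ ≥ c₁(0) ≥ … ≥ c_n(0) ≥ 0` and `c_i'(0+) ≥ −1`
(the latter expressed, for convex `c_i`, through the slopes at `0`). -/
def CondC2 {n : ℕ} (s₀ : ℝ) (c : Fin n → ℝ → ℝ) : Prop :=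
  (∀ i, c i 0 ≤ s₀) ∧ (∀ i j : Fin n, i ≤ j → c j 0 ≤ c i 0) ∧ (∀ i, 0 ≤ c i 0) ∧
    (∀ i, ∀ K : ℝ, 0 < K → c i 0 - K ≤ c i K)

/-- Condition C (iii): `c_i(K) → 0` as `K → ∞`. -/
def CondC3 {n : ℕ} (c : Fin n → ℝ → ℝ) : Prop :=
  ∀ i, Tendsto (c i) atTop (nhds 0)

/-- Condition C (iv): for every `x ≥ 0`, `c_i(0) − c_i(x)` is nonincreasing in `i`. -/
def CondC4 {n : ℕ} (c : Fin n → ℝ → ℝ) : Prop :=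
  ∀ x : ℝ, 0 ≤ x → ∀ i j : Fin n, i ≤ j → c j 0 - c j x ≤ c i 0 - c i x

/-- Condition C. -/
def CondC {n : ℕ} (s₀ : ℝ) (c : Fin n → ℝ → ℝ) : Prop :=
  CondC1 c ∧ CondC2 s₀ c ∧ CondC3 c ∧ CondC4 c

/-- Condition P (i). -/
def CondP1 {n : ℕ} (p : Fin n → ℝ → ℝ) : Prop :=
  ∀ i, (∀ x, 0 ≤ x → 0 ≤ p i x) ∧ ConvexOn ℝ (Set.Ici 0) (p i) ∧ MonotoneOn (p i) (Set.Ici 0)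

/-- Condition P (ii): `s₀ ≥ lim (x − p₁(x)) ≥ … ≥ 0` and `0 ≤ p_i'(0+) ≤ 1`. -/
def CondP2 {n : ℕ} (s₀ : ℝ) (p : Fin n → ℝ → ℝ) : Prop :=
  (∃ L : Fin n → ℝ,
    (∀ i, Tendsto (fun x => x - p i x) atTop (nhds (L i))) ∧
    (∀ i, L i ≤ s₀) ∧ (∀ i j : Fin n, i ≤ j → L j ≤ L i) ∧ (∀ i, 0 ≤ L i)) ∧
  (∃ d : Fin n → ℝ,
    (∀ i, Tendsto (fun K => (p i K - p i 0) / K) (nhdsWithin 0 (Set.Ioi 0)) (nhds (d i))) ∧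
    (∀ i, 0 ≤ d i ∧ d i ≤ 1))

/-- Condition P (iii): `p_i(K) → 0` as `K → 0` (within `ℝ₊`). -/
def CondP3 {n : ℕ} (p : Fin n → ℝ → ℝ) : Prop :=
  ∀ i, Tendsto (p i) (nhdsWithin 0 (Set.Ici 0)) (nhds 0)

/-- Condition P (iv): `p_i(x)` is nondecreasing in `i`. -/
def CondP4 {n : ℕ} (p : Fin n → ℝ → ℝ) : Prop :=
  ∀ x : ℝ, 0 ≤ x → ∀ i j : Fin n, i ≤ j → p i x ≤ p j x

/-- Condition P. -/
def CondP {n : ℕ} (s₀ : ℝ) (p : Fin n → ℝ → ℝ) : Prop :=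
  CondP1 p ∧ CondP2 s₀ p ∧ CondP3 p ∧ CondP4 p

/-- The measures `μ_i` defined from the put prices by `μ_i([0,K]) = p_i'(K)`;
equivalently, `p_i(K) = ∫ (K − x)⁺ μ_i(dx)`. -/
def PutPricesFrom {n : ℕ} (p : Fin n → ℝ → ℝ) (μ : Fin n → Measure ℝ) : Prop :=
  (∀ i, IsProbabilityMeasure (μ i)) ∧ (∀ i, μ i (Set.Iio 0) = 0) ∧
  (∀ i, Integrable (fun x => x) (μ i)) ∧
  (∀ i, ∀ K : ℝ, 0 ≤ K → p i K = ∫ x, max (K - x) 0 ∂(μ i))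

/-- The path `(s₀, s₁, …, s_i, x, s_{i+2}, …, s_n)`. -/
def mkPath {n : ℕ} (s₀ : ℝ) (i : Fin n) (s : Fin i → ℝ) (x : ℝ)
    (t : Fin (n - ((i : ℕ) + 1)) → ℝ) : Path n := fun j =>
  if h0 : (j : ℕ) = 0 then s₀
  else if h1 : (j : ℕ) ≤ (i : ℕ) then
    s ⟨(j : ℕ) - 1, by have := j.isLt; have := i.isLt; omega⟩
  else if h2 : (j : ℕ) = (i : ℕ) + 1 then x
  else t ⟨(j : ℕ) - (i : ℕ) - 2, by have := j.isLt; have := i.isLt; omega⟩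

/-- The family `β_i : ℝ₊^i → ℝ` defined recursively by `β_n = 0` and
`β_i(s₁,…,s_i) = (sup_{s_{i+2},…,s_n} limsup_{x→∞} ((β_{i+1}(s₁,…,s_i,x)
 + G(s₁,…,s_i,x,s_{i+2},…,s_n)/x)·1_𝔓)) ∨ 0`. -/
def IsBetaFamily {n : ℕ} (s₀ : ℝ) (P : Set (Path n)) (G : (Fin n → ℝ) → EReal)
    (β : (i : Fin (n + 1)) → (Fin i → ℝ) → ℝ) : Prop :=
  (∀ s, β (Fin.last n) s = 0) ∧
  ∀ (i : Fin n) (s : Fin i → ℝ), (∀ k, 0 ≤ s k) →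
    (β ⟨(i : ℕ), by have := i.isLt; omega⟩ s : EReal) =
      max 0 (⨆ (t : Fin (n - ((i : ℕ) + 1)) → ℝ) (_ : ∀ k, 0 ≤ t k),
        Filter.limsup (fun x : ℝ =>
          if mkPath s₀ i s x t ∈ P then
            ((β ⟨(i : ℕ) + 1, by have := i.isLt; omega⟩ (Fin.snoc s x) : ℝ) : EReal)
              + G (tailCoords (mkPath s₀ i s x t)) * ((x⁻¹ : ℝ) : EReal)
          else 0) Filter.atTop)

/-- Gains of the dynamic strategy `(β_i)`: `β₀(S₁ − s₀) + Σ_i β_i(S₁,…,S_i)(S_{i+1} − S_i)`. -/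
def gainsOf {n : ℕ} (β : (i : Fin (n + 1)) → (Fin i → ℝ) → ℝ) (ω : Path n) : ℝ :=
  ∑ j : Fin n, β ⟨(j : ℕ), by have := j.isLt; omega⟩ (restr j ω) * (ω j.succ - ω j.castSucc)

/-- The penalty function `λ_𝔓(s₁,…,s_n) = (1 + s₁ + … + s_n)·1{(s₁,…,s_n) ∉ 𝔓}`. -/
def lambdaP {n : ℕ} (P : Set (Path n)) (ω : Path n) : ℝ :=
  if ω ∈ P then 0 else 1 + ∑ i : Fin n, ω i.succ

/-- `min(s₀, s₁, …, s_m)`. -/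
def pmin {m : ℕ} (s₀ : ℝ) (s : Fin m → ℝ) : ℝ :=
  Finset.univ.inf' Finset.univ_nonempty
    (fun j : Fin (m + 1) =>
      if h : (j : ℕ) = 0 then s₀ else s ⟨(j : ℕ) - 1, by have := j.isLt; omega⟩)

/-- `max(s₀, s₁, …, s_m)`. -/
def pmax {m : ℕ} (s₀ : ℝ) (s : Fin m → ℝ) : ℝ :=
  Finset.univ.sup' Finset.univ_nonempty
    (fun j : Fin (m + 1) =>
      if h : (j : ℕ) = 0 then s₀ else s ⟨(j : ℕ) - 1, by have := j.isLt; omega⟩)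

/-!
A superhedge is a put portfolio `g` (a function of `s₁` that is constant for large `s₁`) plus a
long position `Δ ≥ 0`, with `G x ≤ g x + Δ (x - s₀)` on `𝔓₁`. Dividing by `x` and letting
`x → ∞` forces `Δ ≥ β⁺`, and integrating against `μ` gives the price bound
`∫ g dμ ≥ ∫ G dμ + Δ (s₀ - ∫ x dμ)`. Conversely, for `Δ > β⁺` the remainder
`H x = G x - Δ (x - s₀)` is at most `Δ s₀` far out on `𝔓₁`. Below a threshold `T`, `H` is
upper semicontinuous on a compact set, so it is the pointwise limit from above of the piecewise
linear interpolants of its local suprema on finer and finer grids, and such interpolants are put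
portfolios. Their prices converge by dominated convergence, and the tail of `μ` beyond `T` costs
arbitrarily little.
-/

def linInterpSlope (N : ℕ) (t v : ℕ → ℝ) (k : ℕ) : ℝ :=
  if k < N then (v (k + 1) - v k) / (t (k + 1) - t k) else 0

/-- For increasing knots `t`, the interpolant of the values `v k` at `t 0, …, t N`, constant to
the right of `t N`, written as cash plus puts struck at the knots. -/
def linInterp (N : ℕ) (t v : ℕ → ℝ) (x : ℝ) : ℝ :=
  v N + ∑ k ∈ Finset.range N,
    (linInterpSlope N t v (k + 1) - linInterpSlope N t v k) * max (t (k + 1) - x) 0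

lemma sum_range_ite_le_sub (s : ℕ → ℝ) {j N : ℕ} (hj : j ≤ N) :
    ∑ k ∈ Finset.range N, (if j ≤ k then s (k + 1) - s k else 0) = s N - s j := by
  induction N, hj using Nat.le_induction with
  | base =>
    simp_rw [Finset.sum_eq_zero fun k hk => if_neg (not_le.2 (Finset.mem_range.1 hk)), sub_self]
  | succ N hjN ih => rw [Finset.sum_range_succ, ih, if_pos hjN]; ring

lemma exists_mem_Icc_succ_of_mem_Icc {t : ℕ → ℝ} {N : ℕ} {x : ℝ}
    (hx : x ∈ Icc (t 0) (t (N + 1))) : ∃ j ≤ N, x ∈ Icc (t j) (t (j + 1)) := by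
  induction N with
  | zero => exact ⟨0, le_rfl, hx⟩
  | succ N ih =>
    by_cases hxN : x ≤ t (N + 1)
    · obtain ⟨j, hjN, hj⟩ := ih ⟨hx.1, hxN⟩
      exact ⟨j, hjN.trans N.le_succ, hj⟩
    · exact ⟨N + 1, le_rfl, (not_le.1 hxN).le, hx.2⟩

section linInterp

variable {N : ℕ} {t v : ℕ → ℝ}

lemma linInterp_of_le (ht : Monotone t) {x : ℝ} (hx : t N ≤ x) : linInterp N t v x = v N := by
  refine add_eq_left.2 (Finset.sum_eq_zero fun k hk => ?_)
  have : t (k + 1) ≤ x := (ht (Finset.mem_range.1 hk)).trans hx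
  rw [max_eq_right (by linarith), mul_zero]

lemma linInterp_eq_add_slope_mul (ht : Monotone t) {j : ℕ} (hj : j < N) {x : ℝ}
    (hx : x ∈ Icc (t j) (t (j + 1))) :
    linInterp N t v x = linInterp N t v (t (j + 1)) + linInterpSlope N t v j * (x - t (j + 1)) := by
  have hput : ∀ k, max (t (k + 1) - x) 0 - max (t (k + 1) - t (j + 1)) 0 =
      if j ≤ k then t (j + 1) - x else 0 := by
    intro k
    split_ifs with hjk
    · have := ht (Nat.succ_le_succ hjk)
      rw [max_eq_left (by linarith [hx.2]), max_eq_left (by linarith)]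
      ring
    · have := ht (Nat.succ_le_of_lt (not_le.1 hjk))
      rw [max_eq_right (by linarith [hx.1]), max_eq_right (by linarith [ht (Nat.le_succ j)])]
      ring
  have hdiff : linInterp N t v x - linInterp N t v (t (j + 1)) =
      (∑ k ∈ Finset.range N, if j ≤ k then
        linInterpSlope N t v (k + 1) - linInterpSlope N t v k else 0) * (t (j + 1) - x) := by
    rw [linInterp, linInterp, add_sub_add_left_eq_sub, ← Finset.sum_sub_distrib, Finset.sum_mul]
    refine Finset.sum_congr rfl fun k _ => ?_
    rw [← mul_sub, hput]
    split_ifs <;> ring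
  have hslopeN : linInterpSlope N t v N = 0 := if_neg (lt_irrefl N)
  rw [sum_range_ite_le_sub _ hj.le, hslopeN] at hdiff
  linarith

lemma linInterp_knot (ht : StrictMono t) {j : ℕ} (hj : j ≤ N) : linInterp N t v (t j) = v j := by
  induction hj using Nat.decreasingInduction with
  | self => exact linInterp_of_le ht.monotone le_rfl
  | of_succ j hjN ih =>
    have hgap : t (j + 1) - t j ≠ 0 := (sub_pos.2 (ht j.lt_succ_self)).ne'
    rw [linInterp_eq_add_slope_mul ht.monotone hjN ⟨le_rfl, (ht j.lt_succ_self).le⟩, ih,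
      linInterpSlope, if_pos hjN]
    field_simp
    ring

lemma linInterp_mem_uIcc (ht : StrictMono t) {j : ℕ} (hj : j < N) {x : ℝ}
    (hx : x ∈ Icc (t j) (t (j + 1))) : linInterp N t v x ∈ uIcc (v j) (v (j + 1)) := by
  have hgap : 0 < t (j + 1) - t j := sub_pos.2 (ht j.lt_succ_self)
  have hθ : (x - t j) / (t (j + 1) - t j) ∈ Icc (0 : ℝ) 1 :=
    ⟨div_nonneg (by linarith [hx.1]) hgap.le, (div_le_one hgap).2 (by linarith [hx.2])⟩
  have hline : linInterp N t v x =
      AffineMap.lineMap (v j) (v (j + 1)) ((x - t j) / (t (j + 1) - t j)) := by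
    rw [linInterp_eq_add_slope_mul ht.monotone hj hx, linInterp_knot ht hj, linInterpSlope,
      if_pos hj, AffineMap.lineMap_apply_ring']
    field_simp
    ring
  rw [hline, ← segment_eq_uIcc]
  exact lineMap_mem_segment ℝ _ _ hθ

end linInterp

def localSup (h : ℝ → ℝ) (x δ : ℝ) : ℝ := sSup (h '' Icc (x - δ) (x + δ))

section localSup

variable {h : ℝ → ℝ}

lemma le_localSup (hbdd : BddAbove (range h)) {x δ y : ℝ} (hy : y ∈ Icc (x - δ) (x + δ)) :
    h y ≤ localSup h x δ :=
  le_csSup (hbdd.mono (image_subset_range _ _)) (mem_image_of_mem h hy)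

lemma localSup_le {x δ c : ℝ} (hδ : 0 ≤ δ) (hc : ∀ y ∈ Icc (x - δ) (x + δ), h y ≤ c) :
    localSup h x δ ≤ c :=
  csSup_le ((nonempty_Icc.2 (by linarith)).image h) (forall_mem_image.2 hc)

lemma localSup_le_localSup (hbdd : BddAbove (range h)) {x δ y ε : ℝ} (hδ : 0 ≤ δ)
    (hsub : Icc (x - δ) (x + δ) ⊆ Icc (y - ε) (y + ε)) : localSup h x δ ≤ localSup h y ε :=
  localSup_le hδ fun _ hz => le_localSup hbdd (hsub hz)

lemma tendsto_localSup (hbdd : BddAbove (range h)) {x : ℝ} (hx : UpperSemicontinuousAt h x) :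
    Tendsto (localSup h x) (𝓝[≥] 0) (𝓝 (h x)) := by
  refine tendsto_order.2 ⟨fun c hc => ?_, fun c hc => ?_⟩
  · filter_upwards [self_mem_nhdsWithin] with δ (hδ : 0 ≤ δ)
    exact hc.trans_le (le_localSup hbdd ⟨by linarith, by linarith⟩)
  · obtain ⟨c', hxc', hc'c⟩ := exists_between hc
    obtain ⟨ε, hε, hball⟩ := Metric.eventually_nhds_iff.1 (hx c' hxc')
    filter_upwards [Ico_mem_nhdsGE hε] with δ hδ
    refine (localSup_le hδ.1 fun y hy => (hball ?_).le).trans_lt hc'c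
    rw [Real.dist_eq, abs_lt]
    constructor <;> linarith [hy.1, hy.2, hδ.2]

lemma linInterp_localSup_mem_Icc (hbdd : BddAbove (range h)) {N : ℕ} {t : ℕ → ℝ}
    (ht : StrictMono t) {d : ℝ} (hd : ∀ k, t (k + 1) ≤ t k + d) {x : ℝ} (hx : t 0 ≤ x) :
    linInterp N t (fun k => localSup h (t k) d) x ∈
      Icc (h (min x (t N))) (localSup h (min x (t N)) (2 * d)) := by
  have hd0 : 0 ≤ d := by linarith [hd 0, ht (Nat.zero_lt_one)]
  by_cases hNx : t N ≤ x
  · rw [min_eq_right hNx, linInterp_of_le ht.monotone hNx]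
    exact ⟨le_localSup hbdd ⟨by linarith, by linarith⟩,
      localSup_le_localSup hbdd hd0 (Icc_subset_Icc (by linarith) (by linarith))⟩
  obtain ⟨M, rfl⟩ : ∃ M, N = M + 1 :=
    Nat.exists_eq_succ_of_ne_zero fun hN => hNx (by rwa [hN])
  rw [min_eq_left (not_le.1 hNx).le]
  obtain ⟨j, hjM, hj⟩ := exists_mem_Icc_succ_of_mem_Icc ⟨hx, (not_le.1 hNx).le⟩
  have hmem := linInterp_mem_uIcc (v := fun k => localSup h (t k) d) ht (Nat.lt_succ_of_le hjM) hj
  obtain ⟨hxj, hxj1⟩ := hj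
  have hdj := hd j
  exact ⟨(le_inf (le_localSup hbdd ⟨by linarith, by linarith⟩)
      (le_localSup hbdd ⟨by linarith, by linarith⟩)).trans hmem.1,
    hmem.2.trans (sup_le
      (localSup_le_localSup hbdd hd0 (Icc_subset_Icc (by linarith) (by linarith)))
      (localSup_le_localSup hbdd hd0 (Icc_subset_Icc (by linarith) (by linarith))))⟩

end localSup

namespace Static

def putPayoffAt (X : Static 1) (x : ℝ) : ℝ :=
  X.const + ∑ k, X.coeff k * max (X.strike k - x) 0

variable (X : Static 1)

lemma putPayoff_eq_putPayoffAt (ω : Path 1) : X.putPayoff ω = X.putPayoffAt (ω 1) := by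
  simp only [putPayoff, putPayoffAt, Subsingleton.elim (X.idx _) 0]
  rfl

lemma continuous_putPayoffAt : Continuous X.putPayoffAt := by
  unfold putPayoffAt
  fun_prop

lemma putPayoffAt_eventually_eq_const : ∀ᶠ x in atTop, X.putPayoffAt x = X.const := by
  filter_upwards [eventually_all.2 fun k => eventually_ge_atTop (X.strike k)] with x hx
  refine add_eq_left.2 (Finset.sum_eq_zero fun k _ => ?_)
  rw [max_eq_right (sub_nonpos.2 (hx k)), mul_zero]

lemma integrable_putPayoffAt {μ : Measure ℝ} [IsFiniteMeasure μ]
    (hmom : Integrable (fun x => x) μ) : Integrable X.putPayoffAt μ :=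
  (integrable_const _).add (integrable_finsetSum _ fun _ _ =>
    (((integrable_const _).sub hmom).pos_part).const_mul _)

lemma price_eq_integral_putPayoffAt {μ : Measure ℝ} [IsProbabilityMeasure μ]
    (hmom : Integrable (fun x => x) μ) :
    X.price (fun _ K => ∫ x, max (K - x) 0 ∂μ) = ∫ x, X.putPayoffAt x ∂μ := by
  have hput : ∀ k, Integrable (fun x => X.coeff k * max (X.strike k - x) 0) μ := fun k =>
    (((integrable_const _).sub hmom).pos_part).const_mul _
  unfold putPayoffAt
  rw [integral_add (integrable_const _) (integrable_finsetSum _ fun k _ => hput k),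
    integral_finsetSum _ fun k _ => hput k, integral_const, probReal_univ, one_smul]
  simp only [price, integral_const_mul]

end Static

lemma exists_static_putPayoffAt_eq_linInterp {N : ℕ} {t : ℕ → ℝ} (v : ℕ → ℝ)
    (ht : ∀ k, 0 ≤ t k) : ∃ X : Static 1, X.putPayoffAt = linInterp N t v :=
  ⟨⟨v N, N, fun k => linInterpSlope N t v (k + 1) - linInterpSlope N t v k, fun _ => 0,
      fun k => t (k + 1), fun _ => ht _⟩,
    funext fun x => congrArg (v N + ·) (Fin.sum_univ_eq_sum_range
      (fun k => (linInterpSlope N t v (k + 1) - linInterpSlope N t v k) * max (t (k + 1) - x) 0) N)⟩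

/-- Interpolate the local suprema of `h` on the grid of mesh `T / (n + 1)`. -/
theorem exists_static_tendsto_comp_min {h : ℝ → ℝ} (hh : UpperSemicontinuous h) {C T : ℝ}
    (hC : ∀ x, |h x| ≤ C) (hT : 0 < T) :
    ∃ X : ℕ → Static 1, ∀ x, 0 ≤ x →
      (∀ n, h (min x T) ≤ (X n).putPayoffAt x ∧ |(X n).putPayoffAt x| ≤ C) ∧
      Tendsto (fun n => (X n).putPayoffAt x) atTop (𝓝 (h (min x T))) := by
  have hbdd : BddAbove (range h) := ⟨C, forall_mem_range.2 fun x => (abs_le.1 (hC x)).2⟩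
  set d : ℕ → ℝ := fun n => T / ((n + 1 : ℕ) : ℝ)
  have hd : ∀ n, 0 < d n := fun n => by positivity
  have ht : ∀ n, StrictMono fun k : ℕ => (k : ℝ) * d n := fun n a b hab =>
    mul_lt_mul_of_pos_right (Nat.cast_lt.2 hab) (hd n)
  have htN : ∀ n, ((n + 1 : ℕ) : ℝ) * d n = T := fun n => mul_div_cancel₀ T (by positivity)
  choose X hX using fun n => exists_static_putPayoffAt_eq_linInterp
    (N := n + 1) (t := fun k => (k : ℝ) * d n) (fun k => localSup h (k * d n) (d n))
    (fun k => by positivity [hd n])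
  refine ⟨X, fun x hx => ?_⟩
  have hsq : ∀ n, (X n).putPayoffAt x ∈ Icc (h (min x T)) (localSup h (min x T) (2 * d n)) := by
    intro n
    rw [hX n, ← htN n]
    exact linInterp_localSup_mem_Icc hbdd (ht n) (fun k => by push_cast; linarith)
      (by simpa using hx)
  have hd_lim : Tendsto (fun n => 2 * d n) atTop (𝓝[≥] 0) := by
    refine tendsto_nhdsWithin_iff.2 ⟨?_, Eventually.of_forall fun n => (mul_pos two_pos (hd n)).le⟩
    simpa [d] using
      ((tendsto_const_div_atTop_nhds_zero_nat T).comp (tendsto_add_atTop_nat 1)).const_mul 2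
  refine ⟨fun n => ⟨(hsq n).1, abs_le.2 ⟨(abs_le.1 (hC _)).1.trans (hsq n).1,
    (hsq n).2.trans (localSup_le (by positivity [hd n]) fun y _ => (abs_le.1 (hC y)).2)⟩⟩, ?_⟩
  exact tendsto_of_tendsto_of_tendsto_of_le_of_le tendsto_const_nhds
    ((tendsto_localSup hbdd (hh _)).comp hd_lim) (fun n => (hsq n).1) (fun n => (hsq n).2)

/-- The paper's admissibility `Δ ≥ 0` and `Ψ_{X,Δ} ≥ G` on `{s₀} × 𝔓₁`, as functions of `s₁`. -/
def IsPutSuperhedge (s₀ : ℝ) (P1 : Set ℝ) (G : ℝ → ℝ) (X : Static 1) (Δ : ℝ) : Prop :=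
  0 ≤ Δ ∧ ∀ x ∈ P1, G x ≤ X.putPayoffAt x + Δ * (x - s₀)

lemma Dyn.gains_one (D : Dyn 1) (ω ω' : Path 1) :
    D.gains ω = D.pos 0 (restr 0 ω') * (ω 1 - ω 0) := by
  have hrestr : restr 0 ω = restr 0 ω' := funext fun i => (Nat.not_lt_zero _ i.isLt).elim
  rw [gains, Fin.sum_univ_one, hrestr]
  rfl

lemma V_putPayoff_one_eq_sInf (c : Fin 1 → ℝ → ℝ) (s₀ : ℝ) (P1 : Set ℝ) (G : ℝ → ℝ) :
    V Static.putPayoff c {ω : Path 1 | ω 0 = s₀ ∧ ω 1 ∈ P1} (fun ω => ((G (ω 1) : ℝ) : EReal)) =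
      sInf ((fun X : Static 1 => (X.price c : EReal)) ''
        {X | ∃ Δ, IsPutSuperhedge s₀ P1 G X Δ}) := by
  unfold V
  congr 1
  ext q
  constructor
  · rintro ⟨X, D, hD, rfl, hX⟩
    refine ⟨X, ⟨D.pos 0 (restr 0 ![s₀, s₀]), hD _ _, fun x hx => ?_⟩, rfl⟩
    have := EReal.coe_le_coe_iff.1 (hX ![s₀, x] ⟨rfl, hx⟩)
    rwa [X.putPayoff_eq_putPayoffAt, D.gains_one _ ![s₀, s₀]] at this
  · rintro ⟨X, ⟨Δ, hΔ, hX⟩, rfl⟩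
    refine ⟨X, ⟨fun _ _ => Δ, fun _ => measurable_const, fun _ => ⟨|Δ|, fun _ => le_rfl⟩⟩,
      fun _ _ => hΔ, rfl, ?_⟩
    rintro ω ⟨hω0, hω1⟩
    rw [EReal.coe_le_coe_iff, X.putPayoff_eq_putPayoffAt, Dyn.gains_one _ _ ω, hω0]
    exact hX _ hω1

section IsPutSuperhedge

variable {μ : Measure ℝ} {s₀ : ℝ} {P1 : Set ℝ} {G : ℝ → ℝ} {X : Static 1} {Δ : ℝ}

lemma integral_mul_sub [IsProbabilityMeasure μ] (hmom : Integrable (fun x => x) μ) (a b : ℝ) :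
    ∫ x, a * (x - b) ∂μ = a * (∫ x, x ∂μ - b) := by
  rw [integral_const_mul, integral_sub hmom (integrable_const b), integral_const, probReal_univ,
    one_smul]

lemma integrable_mul_sub [IsProbabilityMeasure μ] (hmom : Integrable (fun x => x) μ) (a b : ℝ) :
    Integrable (fun x => a * (x - b)) μ :=
  (hmom.sub (integrable_const b)).const_mul a

/-- Put portfolios are eventually constant, so only `Δ` contributes to the slope at infinity. -/
lemma IsPutSuperhedge.limsup_div_le [(atTop ⊓ 𝓟 P1).NeBot]
    (hcob : IsCoboundedUnder (· ≤ ·) (atTop ⊓ 𝓟 P1) fun x => G x / x)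
    (hX : IsPutSuperhedge s₀ P1 G X Δ) : limsup (fun x => G x / x) (atTop ⊓ 𝓟 P1) ≤ Δ := by
  have hslope : Tendsto (fun x => (X.putPayoffAt x + Δ * (x - s₀)) / x) atTop (𝓝 Δ) := by
    have hlim : Tendsto (fun x : ℝ => (X.const - Δ * s₀) * x⁻¹ + Δ) atTop (𝓝 Δ) := by
      simpa using (tendsto_inv_atTop_zero.const_mul (X.const - Δ * s₀)).add_const Δ
    refine hlim.congr' ?_
    filter_upwards [X.putPayoffAt_eventually_eq_const, eventually_gt_atTop 0] with x hx hx0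
    rw [hx]
    field_simp
    ring
  have hslope' := hslope.mono_left (inf_le_left (b := 𝓟 P1))
  have hle : ∀ᶠ x in atTop ⊓ 𝓟 P1, G x / x ≤ (X.putPayoffAt x + Δ * (x - s₀)) / x := by
    rw [eventually_inf_principal]
    filter_upwards [eventually_gt_atTop 0] with x hx0 hx
    exact div_le_div_of_nonneg_right (hX.2 x hx) hx0.le
  exact (limsup_le_limsup hle hcob hslope'.isBoundedUnder_le).trans_eq hslope'.limsup_eq

lemma IsPutSuperhedge.integral_add_le_price [IsProbabilityMeasure μ]
    (hmom : Integrable (fun x => x) μ) (hP1 : ∀ᵐ x ∂μ, x ∈ P1) (hGint : Integrable G μ)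
    (hX : IsPutSuperhedge s₀ P1 G X Δ) :
    ∫ x, G x ∂μ + Δ * (s₀ - ∫ x, x ∂μ) ≤ X.price (fun _ K => ∫ x, max (K - x) 0 ∂μ) := by
  have hmono : ∫ x, G x ∂μ ≤ ∫ x, (X.putPayoffAt x + Δ * (x - s₀)) ∂μ :=
    integral_mono_ae hGint ((X.integrable_putPayoffAt hmom).add
      (integrable_mul_sub hmom Δ s₀)) (hP1.mono hX.2)
  rw [integral_add (X.integrable_putPayoffAt hmom) (integrable_mul_sub hmom Δ s₀),
    integral_mul_sub hmom] at hmono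
  rw [X.price_eq_integral_putPayoffAt hmom]
  linarith

end IsPutSuperhedge

lemma upperSemicontinuous_piecewise {α β : Type*} [TopologicalSpace α] [Preorder β] {S : Set α}
    (hS : IsClosed S) {f g : α → β} (hf : UpperSemicontinuousOn f S) (hg : UpperSemicontinuous g)
    (hgf : ∀ x ∈ S, g x ≤ f x) : UpperSemicontinuous (S.piecewise f g) := by
  intro x c hc
  by_cases hx : x ∈ S
  · rw [piecewise_eq_of_mem _ _ _ hx] at hc
    filter_upwards [eventually_nhdsWithin_iff.1 (hf x hx c hc),
      hg x c ((hgf x hx).trans_lt hc)] with z hfz hgz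
    by_cases hz : z ∈ S
    · rw [piecewise_eq_of_mem _ _ _ hz]; exact hfz hz
    · rw [piecewise_eq_of_notMem _ _ _ hz]; exact hgz
  · rw [piecewise_eq_of_notMem _ _ _ hx] at hc
    filter_upwards [hS.isOpen_compl.mem_nhds hx, hg x c hc] with z hz hgz
    rwa [piecewise_eq_of_notMem _ _ _ hz]

/-- Extending `G` by `-K|x|` to the left of `0` keeps it upper semicontinuous, hence Borel. -/
lemma integrable_of_upperSemicontinuousOn_Ici {μ : Measure ℝ} (hmom : Integrable (fun x => x) μ)
    (hae : ∀ᵐ x ∂μ, 0 ≤ x) {G : ℝ → ℝ} {K : ℝ} (hG : ∀ x, |G x| ≤ K * |x|)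
    (hGusc : UpperSemicontinuousOn G (Ici 0)) : Integrable G μ := by
  have husc : UpperSemicontinuous ((Ici 0).piecewise G fun x => -(K * |x|)) :=
    upperSemicontinuous_piecewise isClosed_Ici hGusc
      (by fun_prop : Continuous fun x => -(K * |x|)).upperSemicontinuous
      fun x _ => neg_le_of_abs_le (hG x)
  have heq : (Ici 0).piecewise G (fun x => -(K * |x|)) =ᵐ[μ] G :=
    hae.mono fun x hx => piecewise_eq_of_mem _ _ _ hx
  exact (hmom.abs.const_mul K).mono' (husc.measurable.aestronglyMeasurable.congr heq)
    (ae_of_all _ fun x => (Real.norm_eq_abs _).trans_le (hG x))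

lemma exists_upperSemicontinuous_obstacle {S : Set ℝ} (hS : IsClosed S) {H : ℝ → ℝ}
    (hH : UpperSemicontinuousOn H S) {C : ℝ} (hHC : ∀ x ∈ S, |H x| ≤ C) {B : ℝ} (hB : |B| ≤ C)
    (T : ℝ) :
    ∃ h : ℝ → ℝ, UpperSemicontinuous h ∧ (∀ x, |h x| ≤ C) ∧ (∀ x ∈ S, H x ≤ h x) ∧ B ≤ h T ∧
      ∀ x ∈ S, x < T → h x = H x := by
  have hlow : ∀ x ∈ S, -C ≤ H x := fun x hx => neg_le_of_abs_le (hHC x hx)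
  refine ⟨S.piecewise H (fun _ => -C) ⊔ (Ici T).piecewise (fun _ => B) (fun _ => -C),
    (upperSemicontinuous_piecewise hS hH upperSemicontinuous_const hlow).sup
      (upperSemicontinuous_piecewise isClosed_Ici upperSemicontinuousOn_const
        upperSemicontinuous_const fun _ _ => neg_le_of_abs_le hB), fun x => ?_,
    fun x hx => ?_, ?_, fun x hx hxT => ?_⟩
  · have hC : |C| ≤ C := (abs_of_nonneg ((abs_nonneg B).trans hB)).le
    refine abs_max_le_max_abs_abs.trans (max_le ?_ ?_)
    · by_cases hxS : x ∈ S <;> simp [hxS, hHC x, hC]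
    · by_cases hxT : x ∈ Ici T <;> simp [hxT, hB, hC]
  · simp [hx]
  · simp
  · simp [hx, hxT, hlow x hx]

lemma eventually_setIntegral_Ici_lt {μ : Measure ℝ} {f : ℝ → ℝ} (hf : Integrable f μ) {η : ℝ}
    (hη : 0 < η) : ∀ᶠ T in atTop, ∫ x in Ici T, f x ∂μ < η := by
  have htail := tendsto_setIntegral_of_antitone (μ := μ) (f := f) (fun T : ℝ => measurableSet_Ici)
    (fun _ _ hab => Ici_subset_Ici.2 hab) ⟨0, hf.integrableOn⟩
  have hempty : ⋂ T : ℝ, Ici T = ∅ :=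
    eq_empty_of_forall_notMem fun x hx => (lt_add_one x).not_ge (mem_iInter.1 hx (x + 1))
  rw [hempty, Measure.restrict_empty, integral_zero_measure] at htail
  exact htail.eventually (gt_mem_nhds hη)

lemma eventually_le_mul_of_limsup_lt {P1 : Set ℝ} {G : ℝ → ℝ} {Δ : ℝ}
    (hbdd : IsBoundedUnder (· ≤ ·) (atTop ⊓ 𝓟 P1) fun x => G x / x)
    (hlt : limsup (fun x => G x / x) (atTop ⊓ 𝓟 P1) < Δ) :
    ∀ᶠ x in atTop, x ∈ P1 → G x ≤ Δ * x := by
  have hev := eventually_inf_principal.1 (eventually_lt_of_limsup_lt hlt hbdd)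
  filter_upwards [hev, eventually_gt_atTop 0] with x hx hx0 hxP
  exact ((div_lt_iff₀ hx0).1 (hx hxP)).le

lemma nonneg_of_forall_abs_le_mul_abs {G : ℝ → ℝ} {K : ℝ} (hG : ∀ x, |G x| ≤ K * |x|) : 0 ≤ K := by
  simpa using (abs_nonneg _).trans (hG 1)

lemma abs_sub_mul_sub_le {G : ℝ → ℝ} {K Δ : ℝ} (hG : ∀ x, |G x| ≤ K * |x|) (hΔ : 0 ≤ Δ)
    (s₀ x : ℝ) : |G x - Δ * (x - s₀)| ≤ (K + Δ) * |x| + Δ * |s₀| :=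
  calc |G x - Δ * (x - s₀)| ≤ |G x| + Δ * |x - s₀| := by
        simpa [abs_mul, abs_of_nonneg hΔ] using abs_sub (G x) (Δ * (x - s₀))
    _ ≤ K * |x| + Δ * (|x| + |s₀|) := add_le_add (hG x) (mul_le_mul_of_nonneg_left (abs_sub _ _) hΔ)
    _ = _ := by ring

lemma integral_comp_min_le_add_setIntegral {μ : Measure ℝ} [IsFiniteMeasure μ] {h H Ψ : ℝ → ℝ}
    {C T : ℝ} (hh : Measurable h) (hhC : ∀ x, |h x| ≤ C) (hH : Integrable H μ)
    (hΨ : Integrable Ψ μ) (hbelow : ∀ᵐ x ∂μ, x < T → h x ≤ H x)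
    (habove : ∀ᵐ x ∂μ, T ≤ x → h T ≤ H x + Ψ x) :
    ∫ x, h (min x T) ∂μ ≤ ∫ x, H x ∂μ + ∫ x in Ici T, Ψ x ∂μ := by
  rw [← integral_indicator measurableSet_Ici, ← integral_add hH (hΨ.indicator measurableSet_Ici)]
  refine integral_mono_ae ((integrable_const C).mono'
    (hh.comp (by fun_prop : Continuous fun x => min x T).measurable).aestronglyMeasurable
    (ae_of_all _ fun x => hhC _)) (hH.add (hΨ.indicator measurableSet_Ici)) ?_
  filter_upwards [hbelow, habove] with x hxb hxa
  rcases lt_or_ge x T with hxT | hTx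
  · rw [min_eq_left hxT.le, indicator_of_notMem (show x ∉ Ici T from not_le.2 hxT), add_zero]
    exact hxb hxT
  · rw [min_eq_right hTx, indicator_of_mem (show x ∈ Ici T from hTx)]
    exact hxa hTx

lemma exists_isPutSuperhedge_tendsto_le {μ : Measure ℝ} [IsProbabilityMeasure μ] {P1 : Set ℝ}
    (hP1closed : IsClosed P1) (hP1sub : P1 ⊆ Ici 0) (hP1 : ∀ᵐ x ∂μ, x ∈ P1)
    (hmom : Integrable (fun x => x) μ) {G : ℝ → ℝ} {K : ℝ} (hG : ∀ x, |G x| ≤ K * |x|)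
    (hGusc : UpperSemicontinuousOn G (Ici 0)) (hGint : Integrable G μ) (s₀ : ℝ) {Δ : ℝ}
    (hΔ : 0 ≤ Δ) {T : ℝ} (hT : 0 < T) (hTfar : ∀ x ∈ P1, T ≤ x → G x ≤ Δ * x) :
    ∃ (X : ℕ → Static 1) (L : ℝ), (∀ n, IsPutSuperhedge s₀ P1 G (X n) Δ) ∧
      Tendsto (fun n => ∫ x, (X n).putPayoffAt x ∂μ) atTop (𝓝 L) ∧
      L ≤ ∫ x, (G x - Δ * (x - s₀)) ∂μ + ∫ x in Ici T, 2 * ((K + Δ) * |x| + Δ * |s₀|) ∂μ := by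
  set H : ℝ → ℝ := fun x => G x - Δ * (x - s₀)
  have hK := nonneg_of_forall_abs_le_mul_abs hG
  have hHusc : UpperSemicontinuousOn H (Ici 0) := by
    have := hGusc.add ((by fun_prop : Continuous fun x => -(Δ * (x - s₀))).upperSemicontinuous
      |>.upperSemicontinuousOn _)
    simp only [H, sub_eq_add_neg] at this ⊢
    exact this
  set C := (K + Δ) * T + Δ * |s₀|
  have hHC : ∀ x, 0 ≤ x → x ≤ T → |H x| ≤ C := fun x hx0 hxT => by
    have hHx := abs_sub_mul_sub_le hG hΔ s₀ x
    rw [abs_of_nonneg hx0] at hHx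
    have := mul_le_mul_of_nonneg_left hxT (add_nonneg hK hΔ)
    linarith
  obtain ⟨h, hhusc, hhC, hHh, hBh, hhH⟩ := exists_upperSemicontinuous_obstacle
    (hP1closed.inter isClosed_Icc) (hHusc.mono fun x hx => hP1sub hx.1)
    (fun x hx => hHC x hx.2.1 hx.2.2) (B := Δ * s₀)
    (by rw [abs_mul, abs_of_nonneg hΔ]; nlinarith) T
  obtain ⟨X, hX⟩ := exists_static_tendsto_comp_min hhusc hhC hT
  refine ⟨X, ∫ x, h (min x T) ∂μ, fun n => ⟨hΔ, fun x hx => ?_⟩,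
    tendsto_integral_of_dominated_convergence (fun _ => C)
      (fun n => (X n).continuous_putPayoffAt.aestronglyMeasurable) (integrable_const C)
      (fun n => hP1.mono fun x hx => ((hX x (hP1sub hx)).1 n).2)
      (hP1.mono fun x hx => (hX x (hP1sub hx)).2), ?_⟩
  · suffices H x ≤ h (min x T) by linarith [((hX x (hP1sub hx)).1 n).1]
    rcases le_total x T with hxT | hTx
    · rw [min_eq_left hxT]; exact hHh x ⟨hx, hP1sub hx, hxT⟩
    · rw [min_eq_right hTx]; linarith [hTfar x hx hTx]
  refine integral_comp_min_le_add_setIntegral hhusc.measurable hhC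
    (hGint.sub (integrable_mul_sub hmom Δ s₀))
    (((hmom.abs.const_mul _).add (integrable_const _)).const_mul 2)
    (hP1.mono fun x hx hxT => (hhH x ⟨hx, hP1sub hx, hxT.le⟩ hxT).le)
    (hP1.mono fun x hx hTx => ?_)
  have hx0 : 0 ≤ x := hP1sub hx
  have hHx := abs_sub_mul_sub_le hG hΔ s₀ x
  have := mul_le_mul_of_nonneg_left hTx (add_nonneg hK hΔ)
  rw [abs_of_nonneg hx0] at hHx ⊢
  linarith [(abs_le.1 (hhC T)).2, neg_abs_le (H x)]

theorem exists_isPutSuperhedge_price_lt {μ : Measure ℝ} [IsProbabilityMeasure μ] {P1 : Set ℝ}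
    (hP1closed : IsClosed P1) (hP1sub : P1 ⊆ Ici 0) (hP1 : ∀ᵐ x ∂μ, x ∈ P1)
    (hmom : Integrable (fun x => x) μ) {G : ℝ → ℝ} {K : ℝ} (hG : ∀ x, |G x| ≤ K * |x|)
    (hGusc : UpperSemicontinuousOn G (Ici 0)) (hGint : Integrable G μ) (s₀ : ℝ) {Δ : ℝ}
    (hΔ : 0 ≤ Δ) (hfar : ∀ᶠ x in atTop, x ∈ P1 → G x ≤ Δ * x) {η : ℝ} (hη : 0 < η) :
    ∃ X : Static 1, IsPutSuperhedge s₀ P1 G X Δ ∧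
      X.price (fun _ K => ∫ x, max (K - x) 0 ∂μ) < ∫ x, G x ∂μ + Δ * (s₀ - ∫ x, x ∂μ) + η := by
  have hΨint : Integrable (fun x => 2 * ((K + Δ) * |x| + Δ * |s₀|)) μ :=
    ((hmom.abs.const_mul _).add (integrable_const _)).const_mul 2
  obtain ⟨T, hT, hTfar, hTtail⟩ := ((eventually_gt_atTop 0).and
    ((eventually_forall_ge_atTop.2 hfar).and (eventually_setIntegral_Ici_lt hΨint hη))).exists
  obtain ⟨X, L, hX, hlim, hL⟩ := exists_isPutSuperhedge_tendsto_le hP1closed hP1sub hP1 hmom hG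
    hGusc hGint s₀ hΔ hT fun x hx hTx => hTfar x hTx hx
  rw [integral_sub hGint (integrable_mul_sub hmom Δ s₀), integral_mul_sub hmom] at hL
  obtain ⟨n, hn⟩ := (hlim.eventually (gt_mem_nhds
    (show L < ∫ x, G x ∂μ + Δ * (s₀ - ∫ x, x ∂μ) + η by linarith))).exists
  exact ⟨X n, hX n, by rwa [(X n).price_eq_integral_putPayoffAt hmom]⟩

lemma abs_div_self_le {G : ℝ → ℝ} {K : ℝ} (hG : ∀ x, |G x| ≤ K * |x|) (x : ℝ) : |G x / x| ≤ K := by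
  rcases eq_or_ne x 0 with rfl | hx
  · simpa using nonneg_of_forall_abs_le_mul_abs hG
  · rw [abs_div]
    exact div_le_of_le_mul₀ (abs_nonneg _) (nonneg_of_forall_abs_le_mul_abs hG) (hG x)

lemma atTop_inf_principal_neBot_of_not_bddAbove {P1 : Set ℝ} (hP1 : ¬ BddAbove P1) :
    (atTop ⊓ 𝓟 P1).NeBot :=
  inf_principal_neBot_iff.2 fun _ hU =>
    let ⟨a, ha⟩ := mem_atTop_sets.1 hU
    let ⟨y, hyP, hay⟩ := not_bddAbove_iff.1 hP1 a
    ⟨y, ha y hay.le, hyP⟩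

theorem V_putPayoff_one_eq_integral_add {s₀ : ℝ} (P1 : Set ℝ) (hP1closed : IsClosed P1)
    (hP1sub : P1 ⊆ Ici 0) (hP1unb : ¬ BddAbove P1) (μ : Measure ℝ) [IsProbabilityMeasure μ]
    (hμP1 : μ P1 = 1) (hmom : Integrable (fun x => x) μ) (hmean : ∫ x, x ∂μ ≤ s₀)
    (G : ℝ → ℝ) (K : ℝ) (hG : ∀ x, |G x| ≤ K * |x|) (hGusc : UpperSemicontinuousOn G (Ici 0))
    (β : ℝ) (hβ : limsup (fun x => G x / x) (atTop ⊓ 𝓟 P1) = β) :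
    V (n := 1) Static.putPayoff (fun _ K' => ∫ x, max (K' - x) 0 ∂μ)
        {ω : Path 1 | ω 0 = s₀ ∧ ω 1 ∈ P1} (fun ω => ((G (ω 1) : ℝ) : EReal)) =
      ((∫ x, G x ∂μ + max β 0 * (s₀ - ∫ x, x ∂μ) : ℝ) : EReal) := by
  have hP1 : ∀ᵐ x ∂μ, x ∈ P1 :=
    (ae_mem_iff_measure_eq hP1closed.measurableSet.nullMeasurableSet).2 (by simp [hμP1])
  have hGint := integrable_of_upperSemicontinuousOn_Ici hmom (hP1.mono hP1sub) hG hGusc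
  have := atTop_inf_principal_neBot_of_not_bddAbove hP1unb
  rw [V_putPayoff_one_eq_sInf]
  apply le_antisymm
  · refine EReal.le_of_forall_lt_iff_le.1 fun z hz => ?_
    have hslope : Tendsto (fun Δ => ∫ x, G x ∂μ + Δ * (s₀ - ∫ x, x ∂μ)) (𝓝[>] (max β 0))
        (𝓝 (∫ x, G x ∂μ + max β 0 * (s₀ - ∫ x, x ∂μ))) :=
      ((continuous_const.add (continuous_id.mul continuous_const)).tendsto _).mono_left
        nhdsWithin_le_nhds
    obtain ⟨Δ, hΔz, hβΔ⟩ :=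
      ((hslope.eventually (gt_mem_nhds (EReal.coe_lt_coe_iff.1 hz))).and self_mem_nhdsWithin).exists
    obtain ⟨X, hX, hprice⟩ := exists_isPutSuperhedge_price_lt hP1closed hP1sub hP1 hmom hG hGusc
      hGint s₀ ((le_max_right _ _).trans (le_of_lt hβΔ))
      (eventually_le_mul_of_limsup_lt
        (isBoundedUnder_of ⟨K, fun x => (abs_le.1 (abs_div_self_le hG x)).2⟩)
        (hβ ▸ (le_max_left β 0).trans_lt hβΔ)) (sub_pos.2 hΔz)
    refine le_trans (sInf_le ⟨X, ⟨Δ, hX⟩, rfl⟩) (EReal.coe_le_coe_iff.2 ?_)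
    linarith
  · refine le_sInf ?_
    rintro _ ⟨X, ⟨Δ, hX⟩, rfl⟩
    have hβΔ : β ≤ Δ := hβ ▸ hX.limsup_div_le
      (isCoboundedUnder_le_of_le _ fun x => (abs_le.1 (abs_div_self_le hG x)).1)
    have := hX.integral_add_le_price hmom hP1 hGint
    have := mul_le_mul_of_nonneg_right (max_le hβΔ hX.1) (sub_nonneg.2 hmean)
    exact EReal.coe_le_coe_iff.2 (by linarith)

lemma tendsto_max_sub_div_atTop (a : ℝ) : Tendsto (fun x => max (x - a) 0 / x) atTop (𝓝 1) := by
  have hlim : Tendsto (fun x : ℝ => 1 - a * x⁻¹) atTop (𝓝 1) := by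
    simpa using tendsto_const_nhds.sub (tendsto_inv_atTop_zero.const_mul a)
  refine hlim.congr' ?_
  filter_upwards [eventually_gt_atTop (max a 0)] with x hx
  rw [max_eq_left (by linarith [le_max_left a 0])]
  field_simp [(le_max_right a 0).trans_lt hx |>.ne']

lemma abs_max_sub_zero_le {a : ℝ} (ha : 0 ≤ a) (x : ℝ) : |max (x - a) 0| ≤ |x| := by
  rw [abs_of_nonneg (le_max_right _ _)]
  exact max_le (by linarith [le_abs_self x]) (abs_nonneg x)

theorem one_period_duality_gap_puts_general
    {s₀ : ℝ}
    (P1 : Set ℝ) (hP1closed : IsClosed P1) (hP1sub : P1 ⊆ Set.Ici 0)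
    (hP1unb : ¬ BddAbove P1)
    (μ : Measure ℝ) (hprob : IsProbabilityMeasure μ) (hμP1 : μ P1 = 1)
    (hmom : Integrable (fun x => x) μ) (hmean : ∫ x, x ∂μ ≤ s₀)
    (G : ℝ → ℝ) (K : ℝ) (hG : ∀ x, |G x| ≤ K * |x|)
    (hGusc : UpperSemicontinuousOn G (Set.Ici 0))
    (β : ℝ) (hβ : Filter.limsup (fun x => G x / x) (atTop ⊓ Filter.principal P1) = β) :
    V (n := 1) Static.putPayoff (fun _ K' => ∫ x, max (K' - x) 0 ∂μ)
        {ω : Path 1 | ω 0 = s₀ ∧ ω 1 ∈ P1} (fun ω => ((G (ω 1) : ℝ) : EReal)) =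
      ((∫ x, G x ∂μ + max β 0 * (s₀ - ∫ x, x ∂μ) : ℝ) : EReal) ∧
    (∀ K' : ℝ, 0 ≤ K' →
      V (n := 1) Static.putPayoff (fun _ K'' => ∫ x, max (K'' - x) 0 ∂μ)
          {ω : Path 1 | ω 0 = s₀ ∧ ω 1 ∈ P1} (fun ω => ((max (ω 1 - K') 0 : ℝ) : EReal)) =
        ((∫ x, max (x - K') 0 ∂μ + (s₀ - ∫ x, x ∂μ) : ℝ) : EReal)) ∧
    (∫ x, x ∂μ < s₀ → ∀ K' : ℝ, 0 ≤ K' →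
      ((∫ x, max (x - K') 0 ∂μ : ℝ) : EReal) <
        V (n := 1) Static.putPayoff (fun _ K'' => ∫ x, max (K'' - x) 0 ∂μ)
          {ω : Path 1 | ω 0 = s₀ ∧ ω 1 ∈ P1} (fun ω => ((max (ω 1 - K') 0 : ℝ) : EReal))) := by
  have hcall : ∀ K' : ℝ, 0 ≤ K' →
      V (n := 1) Static.putPayoff (fun _ K'' => ∫ x, max (K'' - x) 0 ∂μ)
          {ω : Path 1 | ω 0 = s₀ ∧ ω 1 ∈ P1} (fun ω => ((max (ω 1 - K') 0 : ℝ) : EReal)) =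
        ((∫ x, max (x - K') 0 ∂μ + (s₀ - ∫ x, x ∂μ) : ℝ) : EReal) := fun K' hK' => by
    have := atTop_inf_principal_neBot_of_not_bddAbove hP1unb
    have hslope := ((tendsto_max_sub_div_atTop K').mono_left inf_le_left).limsup_eq
      (f := atTop ⊓ 𝓟 P1)
    simpa using V_putPayoff_one_eq_integral_add P1 hP1closed hP1sub hP1unb μ hμP1 hmom hmean
      (fun x => max (x - K') 0) 1 (fun x => by simpa using abs_max_sub_zero_le hK' x)
      ((by fun_prop : Continuous fun x : ℝ => max (x - K') 0).upperSemicontinuous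
        |>.upperSemicontinuousOn _)
      1 hslope
  refine ⟨V_putPayoff_one_eq_integral_add P1 hP1closed hP1sub hP1unb μ hμP1 hmom hmean G K hG hGusc
    β hβ, hcall, fun hlt K' hK' => ?_⟩
  rw [hcall K' hK', EReal.coe_lt_coe_iff]
  linarith

/-- one-period duality gap with puts: with `n = 1`,
`𝔓 = {s₀} × 𝔓₁` for a closed unbounded `𝔓₁ ⊆ ℝ₊`, and `μ` a calibrated marginal
with mean at most `s₀`, the put-based superhedging price of `G` equals
`∫ G dμ + β⁺ (s₀ − ∫ x μ(dx))` where `β = limsup_{x→∞, x∈𝔓₁} G(x)/x`;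
in particular for a call payoff the correction is exactly `s₀ − ∫ x μ(dx)`,
and a duality gap arises whenever `∫ x μ(dx) < s₀`. -/
theorem one_period_duality_gap_puts
    {s₀ : ℝ} (hs₀ : 0 < s₀)
    (P1 : Set ℝ) (hP1closed : IsClosed P1) (hP1sub : P1 ⊆ Set.Ici 0)
    (hP1unb : ¬ BddAbove P1)
    (μ : Measure ℝ) (hprob : IsProbabilityMeasure μ) (hμP1 : μ P1 = 1)
    (hmom : Integrable (fun x => x) μ) (hmean : ∫ x, x ∂μ ≤ s₀)
    (G : ℝ → ℝ) (K : ℝ) (hG : ∀ x, |G x| ≤ K * |x|)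
    (hGusc : UpperSemicontinuousOn G (Set.Ici 0))
    (β : ℝ) (hβ : Filter.limsup (fun x => G x / x) (atTop ⊓ Filter.principal P1) = β) :
    V (n := 1) Static.putPayoff (fun _ K' => ∫ x, max (K' - x) 0 ∂μ)
        {ω : Path 1 | ω 0 = s₀ ∧ ω 1 ∈ P1} (fun ω => ((G (ω 1) : ℝ) : EReal)) =
      ((∫ x, G x ∂μ + max β 0 * (s₀ - ∫ x, x ∂μ) : ℝ) : EReal) ∧
    (∀ K' : ℝ, 0 ≤ K' →
      V (n := 1) Static.putPayoff (fun _ K'' => ∫ x, max (K'' - x) 0 ∂μ)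
          {ω : Path 1 | ω 0 = s₀ ∧ ω 1 ∈ P1} (fun ω => ((max (ω 1 - K') 0 : ℝ) : EReal)) =
        ((∫ x, max (x - K') 0 ∂μ + (s₀ - ∫ x, x ∂μ) : ℝ) : EReal)) ∧
    (∫ x, x ∂μ < s₀ → ∀ K' : ℝ, 0 ≤ K' →
      ((∫ x, max (x - K') 0 ∂μ : ℝ) : EReal) <
        V (n := 1) Static.putPayoff (fun _ K'' => ∫ x, max (K'' - x) 0 ∂μ)
          {ω : Path 1 | ω 0 = s₀ ∧ ω 1 ∈ P1} (fun ω => ((max (ω 1 - K') 0 : ℝ) : EReal))) :=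
  one_period_duality_gap_puts_general P1 hP1closed hP1sub hP1unb μ hprob hμP1 hmom hmean G K hG
    hGusc β hβ

end RobustFin
end
end

section
/- Penalisation identity for the put-based superhedging price: Assume the market input (X_p, 𝒫, 𝔓) admits no weak free lunch with vanishing risk (so M⁻_{μ,𝔓} ≠ ∅ for the measures μ_i defined from the put prices), and let G : ℝ₊^n → [−∞, ∞) be upper semi-continuous with G(s₁,…,s_n) ≤ K(1 + s₁ + … + s_n) for some constant K. With λ_𝔓(s₁,…,s_n) := (1 + s₁ + … + s_n) · 1{(s₁,…,s_n) ∉ 𝔓} and G^{(N)} := G − N λ_𝔓, one has V^{(p)}_{μ,𝔓}(G) = inf_{N ≥ 1} V^{(p)}_μ(G^{(N)}), where V^{(p)}_μ denotes the put-based superhedging price with prediction set Ω. -/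
open MeasureTheory Set Filter Topology
open scoped ENNReal NNReal Classical

noncomputable section

namespace RobustFin

/-- penalisation identity, equation (4.?): if the market input
admits no WFLVR and `G` is upper semi-continuous with linear growth, then
`V^{(p)}_{μ,𝔓}(G) = inf_{N ≥ 1} V^{(p)}_μ(G − N λ_𝔓)`. -/
theorem penalisation_identity_puts
    {n : ℕ} (hn : 1 ≤ n) {s₀ : ℝ} (hs₀ : 0 < s₀)
    (P : Set (Path n)) (hPsub : P ⊆ Omega n s₀) (hPclosed : IsClosed P)
    (p : Fin n → ℝ → ℝ) (μ : Fin n → Measure ℝ) (hμ : PutPricesFrom p μ)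
    (hNA : ¬ WFLVR Static.putPayoff p P)
    (hne : (MSetP s₀ μ P).Nonempty)
    (G : (Fin n → ℝ) → EReal) (hGtop : ∀ s, G s ≠ ⊤)
    (hGusc : UpperSemicontinuousOn G {s | ∀ i, 0 ≤ s i})
    (K : ℝ) (hG : ∀ s : Fin n → ℝ, (∀ i, 0 ≤ s i) → G s ≤ ((K * (1 + ∑ i, s i) : ℝ) : EReal)) :
    V Static.putPayoff p P (fun ω => G (tailCoords ω)) =
      ⨅ (N : ℕ) (_ : 1 ≤ N), V Static.putPayoff p (Omega n s₀)
        (fun ω => G (tailCoords ω) - (((N : ℝ) * lambdaP P ω : ℝ) : EReal)) := by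
  have key : ∀ (q : EReal), q ∈ {q : EReal | ∃ (X : Static n) (D : Dyn n), D.Nonneg ∧
      q = (X.price p : EReal) ∧ ∀ ω ∈ P, G (tailCoords ω) ≤
        ((Static.putPayoff X ω + D.gains ω : ℝ) : EReal)} →
      (⨅ (N : ℕ) (_ : 1 ≤ N), V Static.putPayoff p (Omega n s₀)
        (fun ω => G (tailCoords ω) - (((N : ℝ) * lambdaP P ω : ℝ) : EReal))) ≤ q := by
    rintro q ⟨X, D, hDnn, hq, hhed⟩
    choose C hC using D.bdd
    have hCnn : ∀ j, 0 ≤ C j := fun j =>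
      le_trans (abs_nonneg _) (hC j (fun _ => 0))
    set C₀ : ℝ := ∑ j, C j with hC₀def
    have hC₀nn : 0 ≤ C₀ := Finset.sum_nonneg fun j _ => hCnn j
    have hCle : ∀ j, C j ≤ C₀ := fun j =>
      Finset.single_le_sum (fun j _ => hCnn j) (Finset.mem_univ j)
    set C₁ : ℝ := |X.const| + ∑ k, |X.coeff k| * X.strike k with hC₁def
    have hC₁nn : 0 ≤ C₁ := add_nonneg (abs_nonneg _)
      (Finset.sum_nonneg fun k _ => mul_nonneg (abs_nonneg _) (X.strike_nonneg k))
    set N₀ : ℕ := ⌈K + C₁ + 2 * C₀ * (s₀ + 1)⌉₊ + 1 with hN₀def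
    have hN₀1 : 1 ≤ N₀ := Nat.le_add_left 1 _
    have hN₀big : K + C₁ + 2 * C₀ * (s₀ + 1) ≤ (N₀ : ℝ) := by
      have := Nat.le_ceil (K + C₁ + 2 * C₀ * (s₀ + 1))
      rw [hN₀def]; push_cast; linarith
    refine le_trans (iInf₂_le N₀ hN₀1) (sInf_le ⟨X, D, hDnn, hq, ?_⟩)
    rintro ω ⟨hω0, hωnn⟩
    show G (tailCoords ω) - (((N₀ : ℝ) * lambdaP P ω : ℝ) : EReal) ≤
      ((X.putPayoff ω + D.gains ω : ℝ) : EReal)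
    by_cases hP : ω ∈ P
    · have h0 : lambdaP P ω = 0 := by simp [lambdaP, hP]
      rw [h0, mul_zero]
      have := hhed ω hP
      simpa using this
    · have h0 : lambdaP P ω = 1 + ∑ i : Fin n, ω i.succ := by simp [lambdaP, hP]
      set Sg : ℝ := ∑ i : Fin n, ω i.succ with hSgdef
      have hSgnn : 0 ≤ Sg := Finset.sum_nonneg fun i _ => hωnn i.succ
      -- bound on the static payoff
      have hput : -C₁ ≤ X.putPayoff ω := by
        have hterm : ∀ k ∈ Finset.univ, -(|X.coeff k| * X.strike k) ≤
            X.coeff k * max (X.strike k - ω (X.idx k).succ) 0 := by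
          intro k _
          set m : ℝ := max (X.strike k - ω (X.idx k).succ) 0 with hm
          have hm0 : 0 ≤ m := le_max_right _ _
          have hm1 : m ≤ X.strike k :=
            max_le (by have := hωnn (X.idx k).succ; linarith) (X.strike_nonneg k)
          have h1 : -(|X.coeff k * m|) ≤ X.coeff k * m := neg_abs_le _
          have h2 : |X.coeff k * m| ≤ |X.coeff k| * X.strike k := by
            rw [abs_mul, abs_of_nonneg hm0]
            exact mul_le_mul_of_nonneg_left hm1 (abs_nonneg _)
          linarith
        have hsum := Finset.sum_le_sum hterm
        rw [Finset.sum_neg_distrib] at hsum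
        have hc : -|X.const| ≤ X.const := neg_abs_le _
        simp only [Static.putPayoff]
        rw [hC₁def]; linarith
      -- bound on the dynamic gains
      have hcast : ∑ j : Fin n, ω j.castSucc ≤ s₀ + Sg := by
        have h1 : ∑ i : Fin (n + 1), ω i =
            ∑ j : Fin n, ω j.castSucc + ω (Fin.last n) := Fin.sum_univ_castSucc _
        have h2 : ∑ i : Fin (n + 1), ω i = ω 0 + ∑ j : Fin n, ω j.succ :=
          Fin.sum_univ_succ _
        have h3 := hωnn (Fin.last n)
        rw [hω0] at h2
        rw [hSgdef]; linarith
      have hgain : -(2 * C₀ * (s₀ + Sg)) ≤ D.gains ω := by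
        have hterm : ∀ j ∈ Finset.univ, -(C₀ * (ω j.succ + ω j.castSucc)) ≤
            D.pos j (restr j ω) * (ω j.succ - ω j.castSucc) := by
          intro j _
          have h1 : -(|D.pos j (restr j ω) * (ω j.succ - ω j.castSucc)|) ≤
              D.pos j (restr j ω) * (ω j.succ - ω j.castSucc) := neg_abs_le _
          have h2 : |D.pos j (restr j ω) * (ω j.succ - ω j.castSucc)| ≤
              C₀ * (ω j.succ + ω j.castSucc) := by
            rw [abs_mul]
            have ha : |ω j.succ - ω j.castSucc| ≤ ω j.succ + ω j.castSucc := by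
              have := hωnn j.succ; have := hωnn j.castSucc
              rw [abs_sub_le_iff]; constructor <;> linarith
            have hb : |D.pos j (restr j ω)| ≤ C₀ := le_trans (hC j _) (hCle j)
            exact mul_le_mul hb ha (abs_nonneg _) hC₀nn
          linarith
        have hsum := Finset.sum_le_sum hterm
        rw [Finset.sum_neg_distrib] at hsum
        have hsum2 : ∑ j : Fin n, C₀ * (ω j.succ + ω j.castSucc) ≤
            C₀ * (Sg + (s₀ + Sg)) := by
          rw [← Finset.mul_sum]
          refine mul_le_mul_of_nonneg_left ?_ hC₀nn
          rw [Finset.sum_add_distrib]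
          exact add_le_add le_rfl hcast
        have hfinal : C₀ * (Sg + (s₀ + Sg)) ≤ 2 * C₀ * (s₀ + Sg) := by nlinarith
        simp only [Dyn.gains]
        linarith
      -- putting things together
      have hreal : K * (1 + Sg) - (N₀ : ℝ) * (1 + Sg) ≤
          X.putPayoff ω + D.gains ω := by
        nlinarith [mul_le_mul_of_nonneg_right hN₀big (by linarith : (0:ℝ) ≤ 1 + Sg),
          mul_nonneg hC₁nn hSgnn, mul_nonneg (mul_nonneg hC₀nn hs₀.le) hSgnn,
          mul_nonneg hC₀nn hSgnn]
      calc G (tailCoords ω) - (((N₀ : ℝ) * lambdaP P ω : ℝ) : EReal)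
          ≤ ((K * (1 + Sg) : ℝ) : EReal) - (((N₀ : ℝ) * lambdaP P ω : ℝ) : EReal) := by
            refine EReal.sub_le_sub ?_ le_rfl
            have := hG (tailCoords ω) (fun i => hωnn i.succ)
            simpa [tailCoords, hSgdef] using this
        _ = ((K * (1 + Sg) - (N₀ : ℝ) * (1 + Sg) : ℝ) : EReal) := by
            rw [h0, ← EReal.coe_sub, hSgdef]
        _ ≤ ((X.putPayoff ω + D.gains ω : ℝ) : EReal) := by
            exact_mod_cast hreal
  apply le_antisymm
  · refine le_iInf fun N => le_iInf fun hN => sInf_le_sInf ?_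
    rintro q ⟨X, D, hDnn, hq, hhed⟩
    refine ⟨X, D, hDnn, hq, fun ω hω => ?_⟩
    have h0 : lambdaP P ω = 0 := by simp [lambdaP, hω]
    have h1 := hhed ω (hPsub hω)
    simp only [h0, mul_zero] at h1
    simpa using h1
  · exact le_sInf key

end RobustFin
end
end

section
/- Lower bound on dynamic positions in any put-based superhedge: Let 𝔓 ⊆ Ω be closed and let G : ℝ₊^n → [−∞, ∞) satisfy G(s₁,…,s_n) ≤ K(1 + s₁ + … + s_n) for some constant K. Define β_i : ℝ₊^i → ℝ recursively by β_n ≡ 0 and β_i(s₁,…,s_i) = max(0, sup_{s_{i+2},…,s_n ∈ ℝ₊} limsup_{x→∞} [ (β_{i+1}(s₁,…,s_i,x) + G(s₁,…,s_i,x,s_{i+2},…,s_n)/x) · 1_𝔓(s₁,…,s_i,x,s_{i+2},…,s_n) ]) for i = n−1,…,0. If (X, Δ) is an admissible put-based semi-static strategy whose payoff satisfies X(s₁,…,s_n) + Σ_{i=0}^{n−1} Δ_i(s₁,…,s_i)(s_{i+1} − s_i) ≥ G(s₁,…,s_n) for all (s₁,…,s_n) ∈ 𝔓, then Δ_i(s₁,…,s_i)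 ≥ β_i(s₁,…,s_i) for every i = 0,…,n−1 and every (s₁,…,s_i) ∈ ℝ₊^i. -/
open MeasureTheory Set Filter Topology
open scoped ENNReal NNReal Classical

noncomputable section

namespace RobustFin

/-!
Backward induction on `i`. Fix `s` and `t` and let `x → ∞` along the path `(s₀, s, x, t)`.
Puts are bounded above on `ℝ₊^n` and the positions `Δ_j` are bounded, so up to a constant `C`
not depending on `x`, the only gains that grow with `x` are `Δ_i(s)·x − Δ_{i+1}(s, x)·x`.
Hence on `𝔓` the hedge gives `G ≤ C + (Δ_i(s) − Δ_{i+1}(s, x))·x`, and with `Δ_{i+1} ≥ β_{i+1}`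
this becomes `β_{i+1}(s, x) + G/x ≤ Δ_i(s) + C/x`, whose limsup is at most `Δ_i(s)`.
-/

theorem sum_univ_ite_val_eq {M : Type*} [AddCommMonoid M] {n : ℕ} (m : ℕ) (a : M) :
    ∑ j : Fin n, (if (j : ℕ) = m then a else 0) = if m < n then a else 0 := by
  rw [Fin.sum_univ_eq_sum_range (fun j => if j = m then a else 0), Finset.sum_ite_eq']
  simp

theorem limsup_le_of_eventually_le_div_add {f : ℝ → EReal} {C a : ℝ}
    (h : ∀ᶠ x in atTop, f x ≤ ((C / x + a : ℝ) : EReal)) : limsup f atTop ≤ a := by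
  have hlim : Tendsto (fun x : ℝ => ((C / x + a : ℝ) : EReal)) atTop (𝓝 (a : EReal)) := by
    rw [EReal.tendsto_coe]
    simpa using (tendsto_const_nhds.div_atTop tendsto_id).add_const a
  exact (limsup_le_limsup h).trans hlim.limsup_eq.le

namespace Dyn

variable {n : ℕ}

theorem exists_pos_le (D : Dyn n) : ∃ C, ∀ j y, D.pos j y ≤ C := by
  choose C hC using D.bdd
  refine ⟨∑ j, |C j|, fun j y => ?_⟩
  calc D.pos j y ≤ |D.pos j y| := le_abs_self _
    _ ≤ |C j| := (hC j y).trans (le_abs_self _)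
    _ ≤ ∑ j, |C j| := Finset.single_le_sum (fun k _ => abs_nonneg (C k)) (Finset.mem_univ j)

/-- `Δ_{i+1}(s₁,…,s_i,x)`, read as `0` when `i + 1 = n`. -/
def nextPos (D : Dyn n) (i : Fin n) (s : Fin i → ℝ) (x : ℝ) : ℝ :=
  if h : (i : ℕ) + 1 < n then D.pos ⟨(i : ℕ) + 1, h⟩ (Fin.snoc s x) else 0

theorem nextPos_of_lt (D : Dyn n) (i : Fin n) (s : Fin i → ℝ) (x : ℝ)
    (h : (i : ℕ) + 1 < n) : D.nextPos i s x = D.pos ⟨(i : ℕ) + 1, h⟩ (Fin.snoc s x) :=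
  dif_pos h

end Dyn

namespace Static

variable {n : ℕ}

def putBound (X : Static n) : ℝ := |X.const| + ∑ k, |X.coeff k| * X.strike k

theorem putBound_nonneg (X : Static n) : 0 ≤ X.putBound :=
  add_nonneg (abs_nonneg _)
    (Finset.sum_nonneg fun k _ => mul_nonneg (abs_nonneg _) (X.strike_nonneg k))

theorem putPayoff_le_putBound (X : Static n) {ω : Path n} (hω : ∀ j, 0 ≤ ω j) :
    X.putPayoff ω ≤ X.putBound := by
  refine add_le_add (le_abs_self _) (Finset.sum_le_sum fun k _ => ?_)
  have h0 : 0 ≤ max (X.strike k - ω (X.idx k).succ) 0 := le_max_right _ _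
  have h1 : max (X.strike k - ω (X.idx k).succ) 0 ≤ X.strike k :=
    max_le (by linarith [hω (X.idx k).succ]) (X.strike_nonneg k)
  calc X.coeff k * max (X.strike k - ω (X.idx k).succ) 0
      ≤ |X.coeff k| * max (X.strike k - ω (X.idx k).succ) 0 :=
        mul_le_mul_of_nonneg_right (le_abs_self _) h0
    _ ≤ |X.coeff k| * X.strike k := mul_le_mul_of_nonneg_left h1 (abs_nonneg _)

end Static

section mkPath

variable {n : ℕ} {s₀ : ℝ} (i : Fin n) {s : Fin i → ℝ} {x : ℝ} {t : Fin (n - ((i : ℕ) + 1)) → ℝ}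

theorem mkPath_nonneg (hs₀ : 0 ≤ s₀) (hs : ∀ k, 0 ≤ s k) (hx : 0 ≤ x) (ht : ∀ k, 0 ≤ t k)
    (j : Fin (n + 1)) : 0 ≤ mkPath s₀ i s x t j := by
  unfold mkPath
  split_ifs <;> first | exact hs₀ | exact hs _ | exact hx | exact ht _

theorem mkPath_le (hs₀ : 0 ≤ s₀) (hs : ∀ k, 0 ≤ s k) (ht : ∀ k, 0 ≤ t k)
    {j : Fin (n + 1)} (hj : (j : ℕ) ≠ (i : ℕ) + 1) :
    mkPath s₀ i s x t j ≤ s₀ + ∑ k, s k + ∑ k, t k := by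
  have hs' := Finset.sum_nonneg fun k (_ : k ∈ Finset.univ) => hs k
  have ht' := Finset.sum_nonneg fun k (_ : k ∈ Finset.univ) => ht k
  have hsk k := Finset.single_le_sum (fun k (_ : k ∈ Finset.univ) => hs k) (Finset.mem_univ k)
  have htk k := Finset.single_le_sum (fun k (_ : k ∈ Finset.univ) => ht k) (Finset.mem_univ k)
  have := j.isLt
  unfold mkPath
  split_ifs with h0 h1
  · linarith
  · linarith [hsk ⟨(j : ℕ) - 1, by omega⟩]
  · linarith [htk ⟨(j : ℕ) - (i : ℕ) - 2, by omega⟩]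

theorem mkPath_apply_of_eq_succ {j : Fin (n + 1)} (hj : (j : ℕ) = (i : ℕ) + 1) :
    mkPath s₀ i s x t j = x := by
  simp [mkPath, hj]

theorem restr_mkPath : restr i (mkPath s₀ i s x t) = s := by
  funext k
  simp [restr, mkPath, Nat.succ_le_of_lt k.isLt]

theorem restr_succ_mkPath (h : (i : ℕ) + 1 < n) :
    restr ⟨(i : ℕ) + 1, h⟩ (mkPath s₀ i s x t) = Fin.snoc s x := by
  funext k
  induction k using Fin.lastCases with
  | last => simp [restr, mkPath]
  | cast k => simp [restr, mkPath, Nat.succ_le_of_lt k.isLt]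

end mkPath

theorem Dyn.gains_mkPath_le {n : ℕ} {s₀ : ℝ} {D : Dyn n} {C : ℝ} (hD : D.Nonneg)
    (hC : ∀ j y, D.pos j y ≤ C) (hs₀ : 0 ≤ s₀) (i : Fin n) {s : Fin i → ℝ} (hs : ∀ k, 0 ≤ s k)
    {x : ℝ} (hx : 0 ≤ x) {t : Fin (n - ((i : ℕ) + 1)) → ℝ} (ht : ∀ k, 0 ≤ t k) :
    D.gains (mkPath s₀ i s x t) ≤
      n * (C * (s₀ + ∑ k, s k + ∑ k, t k)) + (D.pos i s - D.nextPos i s x) * x := by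
  set ω := mkPath s₀ i s x t
  set B := s₀ + ∑ k, s k + ∑ k, t k
  have hω : ∀ j, 0 ≤ ω j := mkPath_nonneg i hs₀ hs hx ht
  have hωB {j : Fin (n + 1)} (hj : (j : ℕ) ≠ (i : ℕ) + 1) : ω j ≤ B := mkPath_le i hs₀ hs ht hj
  have hB : 0 ≤ B := (hω 0).trans (hωB (by simp))
  have hC0 : 0 ≤ C := (hD i s).trans (hC i s)
  have hterm (j : Fin n) : D.pos j (restr j ω) * (ω j.succ - ω j.castSucc) ≤
      C * B + (if j = i then D.pos i s * x else 0) -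
        (if (j : ℕ) = (i : ℕ) + 1 then D.nextPos i s x * x else 0) := by
    have hΔ := hD j (restr j ω)
    rcases eq_or_ne j i with rfl | hji
    · have hxj : ω j.succ = x := mkPath_apply_of_eq_succ j rfl
      rw [if_pos rfl, if_neg (by omega), restr_mkPath, hxj]
      nlinarith [hω j.castSucc, hD j s, mul_nonneg hC0 hB]
    rw [if_neg hji]
    rcases eq_or_ne (j : ℕ) ((i : ℕ) + 1) with hj | hj
    · have hlt : (i : ℕ) + 1 < n := hj ▸ j.isLt
      obtain rfl : j = ⟨(i : ℕ) + 1, hlt⟩ := Fin.ext hj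
      have hxj : ω (Fin.castSucc ⟨(i : ℕ) + 1, hlt⟩) = x := mkPath_apply_of_eq_succ i rfl
      have hyB : ω (Fin.succ ⟨(i : ℕ) + 1, hlt⟩) ≤ B := hωB (by simp)
      rw [if_pos rfl, restr_succ_mkPath i hlt, hxj, D.nextPos_of_lt i s x hlt]
      rw [restr_succ_mkPath i hlt] at hΔ
      nlinarith [hC ⟨(i : ℕ) + 1, hlt⟩ (Fin.snoc s x), hω (Fin.succ ⟨(i : ℕ) + 1, hlt⟩)]
    · rw [if_neg hj]
      have hyB : ω j.succ ≤ B := hωB (by simpa using Fin.val_ne_of_ne hji)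
      nlinarith [hC j (restr j ω), hω j.succ, hω j.castSucc]
  calc D.gains ω ≤ ∑ j : Fin n, (C * B + (if j = i then D.pos i s * x else 0) -
        (if (j : ℕ) = (i : ℕ) + 1 then D.nextPos i s x * x else 0)) :=
        Finset.sum_le_sum fun j _ => hterm j
    _ = _ := by
      have hN : (if (i : ℕ) + 1 < n then D.nextPos i s x * x else 0) = D.nextPos i s x * x := by
        unfold Dyn.nextPos
        split_ifs <;> simp
      rw [Finset.sum_sub_distrib, Finset.sum_add_distrib, Finset.sum_ite_eq', sum_univ_ite_val_eq, hN]
      simp only [Finset.sum_const, Finset.card_univ, Fintype.card_fin, nsmul_eq_mul,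
        Finset.mem_univ, if_true]
      ring

theorem IsBetaFamily.apply_eq_zero_of_eq {n : ℕ} {s₀ : ℝ} {P : Set (Path n)}
    {G : (Fin n → ℝ) → EReal} {β : (i : Fin (n + 1)) → (Fin i → ℝ) → ℝ}
    (hβ : IsBetaFamily s₀ P G β) {m : ℕ} (hm : m = n) (hlt : m < n + 1) (u : Fin m → ℝ) :
    β ⟨m, hlt⟩ u = 0 := by
  subst hm
  exact hβ.1 u

theorem beta_le_pos_of_le_nextPos {n : ℕ} {s₀ : ℝ} (hs₀ : 0 ≤ s₀) {P : Set (Path n)}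
    {G : (Fin n → ℝ) → EReal} {β : (i : Fin (n + 1)) → (Fin i → ℝ) → ℝ}
    (hβ : IsBetaFamily s₀ P G β) {X : Static n} {D : Dyn n} (hD : D.Nonneg)
    (hsuper : ∀ ω ∈ P, G (tailCoords ω) ≤ ((X.putPayoff ω + D.gains ω : ℝ) : EReal))
    {i : Fin n} {s : Fin i → ℝ} (hs : ∀ k, 0 ≤ s k)
    (hnext : ∀ x, 0 ≤ x →
      β ⟨(i : ℕ) + 1, by have := i.isLt; omega⟩ (Fin.snoc s x) ≤ D.nextPos i s x) :
    β ⟨i, by have := i.isLt; omega⟩ s ≤ D.pos i s := by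
  obtain ⟨Cd, hCd⟩ := D.exists_pos_le
  rw [← EReal.coe_le_coe_iff, hβ.2 i s hs]
  refine max_le (EReal.coe_nonneg.mpr (hD i s)) (iSup₂_le fun t ht => ?_)
  set C := X.putBound + n * (Cd * (s₀ + ∑ k, s k + ∑ k, t k))
  have hC : 0 ≤ C := by
    have hs' := Finset.sum_nonneg fun k (_ : k ∈ Finset.univ) => hs k
    have ht' := Finset.sum_nonneg fun k (_ : k ∈ Finset.univ) => ht k
    have hCd0 := (hD i s).trans (hCd i s)
    have hX := X.putBound_nonneg
    positivity
  refine limsup_le_of_eventually_le_div_add (C := C) ?_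
  filter_upwards [eventually_gt_atTop 0] with x hx
  split_ifs with hP
  · set ω := mkPath s₀ i s x t
    have hω := mkPath_nonneg i hs₀ hs hx.le ht
    have hhedge : X.putPayoff ω + D.gains ω ≤ C + (D.pos i s - D.nextPos i s x) * x := by
      linarith [X.putPayoff_le_putBound hω, D.gains_mkPath_le hD hCd hs₀ i hs hx.le ht]
    calc _ ≤ ((D.nextPos i s x : ℝ) : EReal) +
          (((C + (D.pos i s - D.nextPos i s x) * x) * x⁻¹ : ℝ) : EReal) := by
          refine add_le_add (EReal.coe_le_coe_iff.mpr (hnext x hx.le)) ?_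
          rw [EReal.coe_mul]
          exact mul_le_mul_of_nonneg_right ((hsuper ω hP).trans (EReal.coe_le_coe_iff.mpr hhedge))
            (EReal.coe_nonneg.mpr (inv_nonneg.mpr hx.le))
      _ = ((C / x + D.pos i s : ℝ) : EReal) := by
          rw [← EReal.coe_add]
          congr 1
          field_simp
          ring
  · exact EReal.coe_nonneg.mpr (add_nonneg (div_nonneg hC hx.le) (hD i s))

/-- lower bound on dynamic positions in any put-based superhedge:
if the semi-static put-based strategy `(X, Δ)` (with nonnegative dynamic positions)
superhedges `G` on `𝔓`, then `Δ_i ≥ β_i` on `ℝ₊^i` for every `i`, where `(β_i)` is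
the recursively defined family. -/
theorem delta_dominates_beta
    {n : ℕ} {s₀ : ℝ} (hs₀ : 0 < s₀)
    (P : Set (Path n))
    (G : (Fin n → ℝ) → EReal)
    (β : (i : Fin (n + 1)) → (Fin i → ℝ) → ℝ) (hβ : IsBetaFamily s₀ P G β)
    (X : Static n) (D : Dyn n) (hD : D.Nonneg)
    (hsuper : ∀ ω ∈ P,
      G (tailCoords ω) ≤ ((Static.putPayoff X ω + D.gains ω : ℝ) : EReal)) :
    ∀ (i : Fin n) (s : Fin i → ℝ), (∀ k, 0 ≤ s k) →
      β ⟨(i : ℕ), by have := i.isLt; omega⟩ s ≤ D.pos i s := by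
  suffices h : ∀ d (i : Fin n), n - (i : ℕ) = d → ∀ s : Fin i → ℝ, (∀ k, 0 ≤ s k) →
      β ⟨i, by have := i.isLt; omega⟩ s ≤ D.pos i s from fun i => h _ i rfl
  intro d
  induction d with
  | zero => intro i hi; have := i.isLt; omega
  | succ d ih =>
    intro i hi s hs
    refine beta_le_pos_of_le_nextPos hs₀.le hβ hD hsuper hs fun x hx => ?_
    by_cases h : (i : ℕ) + 1 < n
    · rw [D.nextPos_of_lt i s x h]
      exact ih ⟨(i : ℕ) + 1, h⟩ (by dsimp only; omega) (Fin.snoc s x)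
        (Fin.lastCases (by simpa using hx) fun k => by simpa using hs k)
    · rw [hβ.apply_eq_zero_of_eq (by omega), Dyn.nextPos, dif_neg h]

end RobustFin
end
end

section
/- Reduction of the transport-with-trading problem to supermartingale measures: Let μ₁,…,μ_n be Borel probability measures on ℝ₊ with finite first moments such that M⁻_μ ≠ ∅, and let G : ℝ₊^n → [−∞, ∞) be upper semi-continuous and bounded. For bounded measurable nonnegative Δ_j write G_Δ(s₁,…,s_n) = G(s₁,…,s_n) − Σ_{j=0}^{n−1} Δ_j(s₁,…,s_j)(s_{j+1} − s_j) (with s₀ fixed). Then sup_{π ∈ Π_μ} inf{∫ G_Δ dπ : Δ_j ∈ C_c(ℝ₊^j, ℝ₊), j = 0,…,n−1} = sup_{ℙ ∈ M⁻_μ} E_ℙ[G]; in particular, for any π ∈ Π_μ \ M⁻_μ the inner infimum equals −∞. -/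
open MeasureTheory Set Filter Topology
open scoped ENNReal NNReal Classical

noncomputable section

theorem UpperSemicontinuousOn.measurable_indicator {X : Type*} [TopologicalSpace X]
    [MeasurableSpace X] [OpensMeasurableSpace X] {f : X → ℝ} {s : Set X}
    (hf : UpperSemicontinuousOn f s) (hs : MeasurableSet s) : Measurable (s.indicator f) := by
  refine measurable_of_restrict_of_restrict_compl hs ?_ ?_
  · have husc : UpperSemicontinuous fun x : s => f x := fun x y hy => by
      simpa only [← map_nhds_subtype_val, eventually_map] using hf x x.2 y hy
    convert husc.measurable using 1
    exact funext fun x => indicator_of_mem x.2 f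
  · convert (measurable_const : Measurable fun _ : (sᶜ : Set X) => (0 : ℝ)) using 1
    exact funext fun x => indicator_of_notMem x.2 f

theorem Pi.single_apply_mem {ι : Type*} [DecidableEq ι] {M : ι → Type*}
    [∀ i, Zero (M i)] {S : ∀ i, Set (M i)} (h0 : ∀ i, 0 ∈ S i) {j : ι} {x : M j} (hx : x ∈ S j)
    (i : ι) : Pi.single j x i ∈ S i := by
  by_cases h : i = j
  · subst h; simpa using hx
  · simpa [Pi.single_eq_of_ne h] using h0 i

namespace MeasureTheory

section SignedPushforward

variable {Ω Y : Type*} [MeasurableSpace Ω] [MeasurableSpace Y] {π : Measure Ω} {φ : Ω → Y}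
  {h : Ω → ℝ}

theorem Integrable.bdd_comp_mul {f : Y → ℝ} {C : ℝ} (hh : Integrable h π) (hf : Measurable f)
    (hφ : Measurable φ) (hfC : ∀ y, |f y| ≤ C) : Integrable (fun ω => f (φ ω) * h ω) π :=
  hh.bdd_mul (hf.comp hφ).aestronglyMeasurable (ae_of_all _ fun ω => hfC (φ ω))

variable (π φ h) in
/-- Together with `mapPosPart π φ (-h)`, this writes the signed measure `B ↦ ∫_{φ ∈ B} h dπ` as a
difference of two measures. -/
def mapPosPart : Measure Y := (π.withDensity fun ω => ENNReal.ofReal (h ω)).map φ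

theorem isFiniteMeasure_mapPosPart (hh : Integrable h π) : IsFiniteMeasure (mapPosPart π φ h) :=
  have := isFiniteMeasure_withDensity_ofReal hh.2
  Measure.isFiniteMeasure_map _ _

theorem integral_mapPosPart {f : Y → ℝ} (hφ : Measurable φ) (hh : AEMeasurable h π)
    (hf : Measurable f) :
    ∫ y, f y ∂mapPosPart π φ h = ∫ ω, f (φ ω) * max (h ω) 0 ∂π := by
  rw [mapPosPart, integral_map hφ.aemeasurable hf.aestronglyMeasurable,
    integral_withDensity_eq_integral_toReal_smul₀ hh.ennreal_ofReal
      (ae_of_all _ fun _ => ENNReal.ofReal_lt_top)]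
  simp only [ENNReal.toReal_ofReal', smul_eq_mul, mul_comm]

theorem integral_comp_mul_eq_sub {f : Y → ℝ} {C : ℝ} (hh : Integrable h π) (hf : Measurable f)
    (hφ : Measurable φ) (hfC : ∀ y, |f y| ≤ C) :
    ∫ ω, f (φ ω) * h ω ∂π = ∫ y, f y ∂mapPosPart π φ h - ∫ y, f y ∂mapPosPart π φ (-h) := by
  rw [integral_mapPosPart hφ hh.1.aemeasurable hf, integral_mapPosPart hφ hh.1.aemeasurable.neg hf,
    ← integral_sub (hh.pos_part.bdd_comp_mul hf hφ hfC) (hh.neg.pos_part.bdd_comp_mul hf hφ hfC)]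
  simp only [Pi.neg_apply, ← mul_sub, max_zero_sub_eq_self]

theorem mapPosPart_le_mapPosPart_neg_iff (hh : Integrable h π) (hφ : Measurable φ) :
    mapPosPart π φ h ≤ mapPosPart π φ (-h) ↔
      ∀ A, MeasurableSet A → ∫ ω, A.indicator (fun _ => (1 : ℝ)) (φ ω) * h ω ∂π ≤ 0 := by
  have := isFiniteMeasure_mapPosPart (φ := φ) hh
  have := isFiniteMeasure_mapPosPart (φ := φ) hh.neg
  refine Measure.le_iff.trans (forall₂_congr fun A hA => ?_)
  have hC : ∀ y, |A.indicator (fun _ => (1 : ℝ)) y| ≤ 1 := fun y => by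
    by_cases hy : y ∈ A <;> simp [hy]
  rw [integral_comp_mul_eq_sub hh (measurable_const.indicator hA) hφ hC, sub_nonpos]
  simp only [← Pi.one_def, integral_indicator_one hA, measureReal_def]
  exact (ENNReal.toReal_le_toReal (measure_ne_top _ _) (measure_ne_top _ _)).symm

theorem integral_comp_mul_nonpos {f : Y → ℝ} {C : ℝ} (hh : Integrable h π) (hf : Measurable f)
    (hφ : Measurable φ) (hf₀ : 0 ≤ f) (hfC : ∀ y, |f y| ≤ C)
    (hle : mapPosPart π φ h ≤ mapPosPart π φ (-h)) : ∫ ω, f (φ ω) * h ω ∂π ≤ 0 := by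
  have := isFiniteMeasure_mapPosPart (φ := φ) hh.neg
  rw [integral_comp_mul_eq_sub hh hf hφ hfC, sub_nonpos]
  exact integral_mono_measure hle (ae_of_all _ hf₀)
    (.of_bound hf.aestronglyMeasurable C (ae_of_all _ hfC))

end SignedPushforward

theorem Measure.le_of_forall_hasCompactSupport_integral_le {X : Type*} [TopologicalSpace X]
    [T2Space X] [LocallyCompactSpace X] [SecondCountableTopology X] [MeasurableSpace X]
    [BorelSpace X]
    {ν₁ ν₂ : Measure X} [IsFiniteMeasure ν₁] [IsFiniteMeasure ν₂]
    (h : ∀ g : X → ℝ, Continuous g → HasCompactSupport g → 0 ≤ g →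
      ∫ x, g x ∂ν₁ ≤ ∫ x, g x ∂ν₂) :
    ν₁ ≤ ν₂ := by
  refine Measure.le_iff.2 fun A hA => ?_
  set f : X → ℝ := A.indicator 1
  have hf : Integrable f (ν₁ + ν₂) := (integrable_const 1).indicator hA
  have hf₀ : 0 ≤ f := indicator_nonneg fun _ _ => zero_le_one
  have hsub : ∀ ν : Measure X, ∀ u v : X → ℝ, Integrable u ν → Integrable v ν →
      ∫ x, u x ∂ν ≤ ∫ x, v x ∂ν + ∫ x, |u x - v x| ∂ν := fun ν u v hu hv =>
    calc ∫ x, u x ∂ν ≤ ∫ x, v x + |u x - v x| ∂ν :=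
          integral_mono hu (hv.add (hu.sub hv).abs) fun x => by
            linarith [le_abs_self (u x - v x)]
      _ = _ := integral_add hv (hu.sub hv).abs
  suffices ∀ ε > 0, ν₁.real A ≤ ν₂.real A + ε by
    rw [← ENNReal.toReal_le_toReal (measure_ne_top _ _) (measure_ne_top _ _)]
    exact le_of_forall_pos_le_add this
  intro ε hε
  obtain ⟨g, hgs, hgε, hgc, -⟩ := hf.exists_hasCompactSupport_integral_sub_le hε
  set gpos : X → ℝ := fun x => max (g x) 0
  have hgposc : Continuous gpos := hgc.max continuous_const
  have hgposs : HasCompactSupport gpos := hgs.comp_left (g := fun t => max t 0) (max_self 0)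
  have hclose : ∀ x, |f x - gpos x| ≤ ‖f x - g x‖ := fun x =>
    calc |f x - gpos x| = |max (f x) 0 - max (g x) 0| := by
          rw [max_eq_left (show (0 : ℝ) ≤ f x from hf₀ x)]
      _ ≤ ‖f x - g x‖ := abs_max_sub_max_le_abs _ _ _
  have hf₁ := hf.mono_measure (Measure.le_add_right le_rfl)
  have hf₂ := hf.mono_measure (Measure.le_add_left le_rfl)
  have hg₁ : Integrable gpos ν₁ := hgposc.integrable_of_hasCompactSupport hgposs
  have hg₂ : Integrable gpos ν₂ := hgposc.integrable_of_hasCompactSupport hgposs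
  have hd : Integrable (fun x => |f x - gpos x|) (ν₁ + ν₂) :=
    (hf.sub (hgposc.integrable_of_hasCompactSupport hgposs)).abs
  have herr : ∫ x, |f x - gpos x| ∂ν₁ + ∫ x, |f x - gpos x| ∂ν₂ ≤ ε := by
    rw [← integral_add_measure (hd.mono_measure (Measure.le_add_right le_rfl))
      (hd.mono_measure (Measure.le_add_left le_rfl))]
    exact (integral_mono hd (hf.sub (hgc.integrable_of_hasCompactSupport hgs)).norm hclose).trans
      hgε
  have h₁ := hsub ν₁ f gpos hf₁ hg₁
  have h₂ := hsub ν₂ gpos f hg₂ hf₂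
  simp only [f, integral_indicator_one hA, abs_sub_comm (gpos _)] at h₁ h₂
  linarith [h gpos hgposc hgposs fun x => le_max_right _ _]

theorem exists_integral_comp_mul_pos {Y : Type*} [TopologicalSpace Y] [T2Space Y]
    [LocallyCompactSpace Y] [SecondCountableTopology Y] [MeasurableSpace Y] [BorelSpace Y]
    {Ω : Type*} [MeasurableSpace Ω] {π : Measure Ω} {φ : Ω → Y} {h : Ω → ℝ}
    (hh : Integrable h π) (hφ : Measurable φ) (hlt : ¬ mapPosPart π φ h ≤ mapPosPart π φ (-h)) :
    ∃ g : Y → ℝ, Continuous g ∧ HasCompactSupport g ∧ 0 ≤ g ∧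
      0 < ∫ ω, g (φ ω) * h ω ∂π := by
  have := isFiniteMeasure_mapPosPart (φ := φ) hh
  have := isFiniteMeasure_mapPosPart (φ := φ) hh.neg
  contrapose! hlt
  refine Measure.le_of_forall_hasCompactSupport_integral_le fun g hgc hgs hg₀ => ?_
  obtain ⟨C, hC⟩ := hgs.exists_bound_of_continuous hgc
  rw [← sub_nonpos, ← integral_comp_mul_eq_sub hh hgc.measurable hφ hC]
  exact hlt g hgc hgs hg₀

end MeasureTheory

namespace RobustFin

variable {n : ℕ} {s₀ : ℝ} {μ : Fin n → Measure ℝ} {π : Measure (Path n)}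

def increment (j : Fin n) (ω : Path n) : ℝ := ω j.succ - ω j.castSucc

theorem measurable_restr (j : Fin n) : Measurable (restr (n := n) j) :=
  measurable_pi_lambda _ fun _ => measurable_pi_apply _

theorem measurable_tailCoords : Measurable (tailCoords (n := n)) :=
  measurable_pi_lambda _ fun _ => measurable_pi_apply _

theorem ae_mem_Omega (hπ : π ∈ PiMu s₀ μ) : ∀ᵐ ω ∂π, ω ∈ Omega n s₀ := by
  have := hπ.1
  rw [ae_iff_measure_eq (by unfold Omega; measurability), measure_univ]
  exact hπ.2.1

theorem integrable_coord (hπ : π ∈ PiMu s₀ μ) (hmom : ∀ i, Integrable (fun x => x) (μ i))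
    (i : Fin (n + 1)) : Integrable (fun ω => ω i) π := by
  have := hπ.1
  induction i using Fin.cases with
  | zero => exact (integrable_const s₀).congr ((ae_mem_Omega hπ).mono fun ω hω => hω.1.symm)
  | succ k =>
    have hk : Integrable (fun x => x) (π.map fun ω => ω k.succ) := hπ.2.2 k ▸ hmom k
    exact (integrable_map_measure aestronglyMeasurable_id
      (measurable_pi_apply k.succ).aemeasurable).1 hk

theorem integrable_increment (hπ : π ∈ PiMu s₀ μ) (hmom : ∀ i, Integrable (fun x => x) (μ i))
    (j : Fin n) : Integrable (increment j) π :=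
  (integrable_coord hπ hmom j.succ).sub (integrable_coord hπ hmom j.castSucc)

theorem isSupermartingaleLaw_iff (hπ : π ∈ PiMu s₀ μ)
    (hmom : ∀ i, Integrable (fun x => x) (μ i)) :
    IsSupermartingaleLaw π ↔ ∀ j : Fin n,
      mapPosPart π (restr j) (increment j) ≤ mapPosPart π (restr j) (-increment j) :=
  forall_congr' fun j =>
    (mapPosPart_le_mapPosPart_neg_iff (integrable_increment hπ hmom j) (measurable_restr j)).symm

theorem integrable_pos_mul_increment (hπ : π ∈ PiMu s₀ μ)
    (hmom : ∀ i, Integrable (fun x => x) (μ i)) (D : Dyn n) (j : Fin n) :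
    Integrable (fun ω => D.pos j (restr j ω) * increment j ω) π :=
  have ⟨_, hC⟩ := D.bdd j
  (integrable_increment hπ hmom j).bdd_comp_mul (D.meas j) (measurable_restr j) hC

theorem integrable_gains (hπ : π ∈ PiMu s₀ μ) (hmom : ∀ i, Integrable (fun x => x) (μ i))
    (D : Dyn n) : Integrable D.gains π :=
  integrable_finsetSum _ fun j _ => integrable_pos_mul_increment hπ hmom D j

theorem integral_gains_nonpos (hπ : π ∈ PiMu s₀ μ) (hmom : ∀ i, Integrable (fun x => x) (μ i))
    (hS : IsSupermartingaleLaw π) {D : Dyn n} (hD : D.Nonneg) : ∫ ω, D.gains ω ∂π ≤ 0 := by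
  change ∫ ω, ∑ j, D.pos j (restr j ω) * increment j ω ∂π ≤ 0
  rw [integral_finsetSum _ fun j _ => integrable_pos_mul_increment hπ hmom D j]
  refine Finset.sum_nonpos fun j _ => ?_
  obtain ⟨C, hC⟩ := D.bdd j
  exact integral_comp_mul_nonpos (integrable_increment hπ hmom j) (D.meas j)
    (measurable_restr j) (hD j) hC ((isSupermartingaleLaw_iff hπ hmom).1 hS j)

theorem exists_position_integral_pos (hπ : π ∈ PiMu s₀ μ)
    (hmom : ∀ i, Integrable (fun x => x) (μ i)) (hS : ¬ IsSupermartingaleLaw π) :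
    ∃ (j : Fin n) (g : (Fin j → ℝ) → ℝ), Continuous g ∧ HasCompactSupport g ∧ 0 ≤ g ∧
      0 < ∫ ω, g (restr j ω) * increment j ω ∂π := by
  obtain ⟨j, hj⟩ := not_forall.1 (mt (isSupermartingaleLaw_iff hπ hmom).2 hS)
  exact ⟨j, exists_integral_comp_mul_pos (integrable_increment hπ hmom j) (measurable_restr j) hj⟩

theorem integrable_comp_tailCoords {G : (Fin n → ℝ) → ℝ} (hπ : π ∈ PiMu s₀ μ)
    (hG : UpperSemicontinuousOn G {s | ∀ i, 0 ≤ s i}) (hGb : ∃ C, ∀ s, |G s| ≤ C) :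
    Integrable (fun ω => G (tailCoords ω)) π := by
  have := hπ.1
  obtain ⟨C, hC⟩ := hGb
  have hmeas := (hG.measurable_indicator (by measurability)).comp (measurable_tailCoords (n := n))
  refine .of_bound (hmeas.aestronglyMeasurable.congr ?_) C (ae_of_all _ fun ω => hC _)
  filter_upwards [ae_mem_Omega hπ] with ω hω
  exact indicator_of_mem (s := {x : Fin n → ℝ | ∀ i, 0 ≤ x i}) (fun i : Fin n => hω.2 i.succ) G

def Dyn.ofContinuous (pos : (j : Fin n) → (Fin j → ℝ) → ℝ) (hc : ∀ j, Continuous (pos j))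
    (hs : ∀ j, HasCompactSupport (pos j)) : Dyn n where
  pos := pos
  meas j := (hc j).measurable
  bdd j :=
    have ⟨C, hC⟩ := (hs j).exists_bound_of_continuous (hc j)
    ⟨C, fun x => by simpa only [Real.norm_eq_abs] using hC x⟩

theorem Dyn.gains_ofContinuous_single (j : Fin n) {g : (Fin j → ℝ) → ℝ}
    (hc : ∀ i, Continuous (Pi.single (M := fun i : Fin n => (Fin i → ℝ) → ℝ) j g i))
    (hs : ∀ i, HasCompactSupport (Pi.single (M := fun i : Fin n => (Fin i → ℝ) → ℝ) j g i))
    (ω : Path n) :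
    (Dyn.ofContinuous _ hc hs).gains ω = g (restr j ω) * increment j ω := by
  refine (Finset.sum_eq_single j (fun i _ h => ?_) (by simp)).trans ?_
  · simp [Dyn.ofContinuous, Pi.single_eq_of_ne h]
  · simp [Dyn.ofContinuous, increment]

def tradedValue (G : (Fin n → ℝ) → ℝ) (π : Measure (Path n)) : EReal :=
  ⨅ (D : Dyn n) (_ : D.Nonneg) (_ : ∀ j, Continuous (D.pos j))
    (_ : ∀ j, HasCompactSupport (D.pos j)), ((∫ ω, (G (tailCoords ω) - D.gains ω) ∂π : ℝ) : EReal)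

theorem tradedValue_le {G : (Fin n → ℝ) → ℝ} {pos : (j : Fin n) → (Fin j → ℝ) → ℝ}
    (hc : ∀ j, Continuous (pos j)) (hs : ∀ j, HasCompactSupport (pos j)) (h₀ : ∀ j, 0 ≤ pos j) :
    tradedValue G π ≤
      ((∫ ω, (G (tailCoords ω) - (Dyn.ofContinuous pos hc hs).gains ω) ∂π : ℝ) : EReal) :=
  iInf_le_of_le (Dyn.ofContinuous pos hc hs) <| iInf_le_of_le (fun j => h₀ j) <|
    iInf_le_of_le hc <| iInf_le _ hs

theorem tradedValue_eq_integral {G : (Fin n → ℝ) → ℝ} (hπ : π ∈ MSet s₀ μ)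
    (hmom : ∀ i, Integrable (fun x => x) (μ i)) (hG : Integrable (fun ω => G (tailCoords ω)) π) :
    tradedValue G π = ((∫ ω, G (tailCoords ω) ∂π : ℝ) : EReal) := by
  refine le_antisymm ?_ (le_iInf fun D => le_iInf fun hD => le_iInf fun _ => le_iInf fun _ => ?_)
  · simpa [Dyn.gains, Dyn.ofContinuous] using
      tradedValue_le (G := G) (π := π) (pos := 0) (fun _ => continuous_zero) (fun _ => .zero)
        fun _ => le_rfl
  · rw [EReal.coe_le_coe_iff, integral_sub hG (integrable_gains hπ.1 hmom D)]
    linarith [integral_gains_nonpos hπ.1 hmom hπ.2 hD]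

theorem tradedValue_eq_bot {G : (Fin n → ℝ) → ℝ} (hπ : π ∈ PiMu s₀ μ)
    (hmom : ∀ i, Integrable (fun x => x) (μ i)) (hS : ¬ IsSupermartingaleLaw π)
    (hG : Integrable (fun ω => G (tailCoords ω)) π) : tradedValue G π = ⊥ := by
  obtain ⟨j, g, hgc, hgs, hg₀, hpos⟩ := exists_position_integral_pos hπ hmom hS
  refine (EReal.eq_bot_iff_forall_lt _).2 fun r => ?_
  -- scaling the profitable position `g` by `N` lowers the value by `N` times a positive amount
  obtain ⟨N, hN⟩ := exists_nat_gt ((∫ ω, G (tailCoords ω) ∂π - r) /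
    ∫ ω, g (restr j ω) * increment j ω ∂π)
  rw [div_lt_iff₀ hpos] at hN
  let pos := Pi.single (M := fun i : Fin n => (Fin i → ℝ) → ℝ) j fun x => N * g x
  have hc : ∀ i, Continuous (pos i) := Pi.single_apply_mem (S := fun _ => {f | Continuous f})
    (fun _ => continuous_zero) (continuous_const.mul hgc)
  have hs : ∀ i, HasCompactSupport (pos i) :=
    Pi.single_apply_mem (S := fun _ => {f | HasCompactSupport f}) (fun _ => .zero) hgs.mul_left
  have h₀ : ∀ i, 0 ≤ pos i := Pi.single_apply_mem (M := fun i : Fin n => (Fin i → ℝ) → ℝ)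
    (S := fun _ => {f | 0 ≤ f}) (j := j) (fun i => le_refl (0 : (Fin i → ℝ) → ℝ))
    fun x => mul_nonneg N.cast_nonneg (hg₀ x)
  refine (tradedValue_le hc hs h₀).trans_lt ?_
  rw [EReal.coe_lt_coe_iff, integral_sub hG (integrable_gains hπ hmom _)]
  simp only [pos, Dyn.gains_ofContinuous_single, mul_assoc, integral_const_mul]
  linarith

theorem reduction_to_supermartingales_general
    {n : ℕ} {s₀ : ℝ}
    (μ : Fin n → Measure ℝ)
    (hmom : ∀ i, Integrable (fun x => x) (μ i))
    (G : (Fin n → ℝ) → ℝ)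
    (hGusc : UpperSemicontinuousOn G {s | ∀ i, 0 ≤ s i})
    (hGbdd : ∃ C : ℝ, ∀ s, |G s| ≤ C) :
    (⨆ π ∈ PiMu s₀ μ,
        ⨅ (D : Dyn n) (_ : D.Nonneg) (_ : ∀ j, Continuous (D.pos j))
          (_ : ∀ j, HasCompactSupport (D.pos j)),
          ((∫ ω, (G (tailCoords ω) - D.gains ω) ∂π : ℝ) : EReal)) =
      (⨆ Q ∈ MSet s₀ μ, ((∫ ω, G (tailCoords ω) ∂Q : ℝ) : EReal)) ∧
    ∀ π ∈ PiMu s₀ μ, π ∉ MSet s₀ μ →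
      (⨅ (D : Dyn n) (_ : D.Nonneg) (_ : ∀ j, Continuous (D.pos j))
          (_ : ∀ j, HasCompactSupport (D.pos j)),
          ((∫ ω, (G (tailCoords ω) - D.gains ω) ∂π : ℝ) : EReal)) = ⊥ := by
  have hG (π) (hπ : π ∈ PiMu s₀ μ) := integrable_comp_tailCoords hπ hGusc hGbdd
  have hM : ∀ Q ∈ MSet s₀ μ, tradedValue G Q = ∫ ω, G (tailCoords ω) ∂Q :=
    fun Q hQ => tradedValue_eq_integral hQ hmom (hG Q hQ.1)
  have hbot : ∀ π ∈ PiMu s₀ μ, π ∉ MSet s₀ μ → tradedValue G π = ⊥ :=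
    fun π hπ hπM => tradedValue_eq_bot hπ hmom (fun hS => hπM ⟨hπ, hS⟩) (hG π hπ)
  refine ⟨le_antisymm (iSup₂_le fun π hπ => ?_) (iSup₂_le fun Q hQ => ?_), hbot⟩
  · by_cases hπM : π ∈ MSet s₀ μ
    · exact (hM π hπM).le.trans (le_iSup₂_of_le π hπM le_rfl)
    · exact (hbot π hπ hπM).trans_le bot_le
  · exact (hM Q hQ).ge.trans (le_iSup₂_of_le (f := fun π _ => tradedValue G π) Q hQ.1 le_rfl)

/-- reduction of the transport-with-trading problem to
supermartingale measures: for bounded upper semi-continuous `G`,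
`sup_{π ∈ Π_μ} inf_Δ ∫ G_Δ dπ = sup_{ℙ ∈ M⁻_μ} E_ℙ[G]`, the infimum being over
continuous, compactly supported, nonnegative dynamic positions; moreover for
`π ∈ Π_μ \ M⁻_μ` the inner infimum is `−∞`. -/
theorem reduction_to_supermartingales
    {n : ℕ} (hn : 1 ≤ n) {s₀ : ℝ} (hs₀ : 0 < s₀)
    (μ : Fin n → Measure ℝ) (hprob : ∀ i, IsProbabilityMeasure (μ i))
    (hsupp : ∀ i, μ i (Set.Iio 0) = 0) (hmom : ∀ i, Integrable (fun x => x) (μ i))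
    (hne : (MSet s₀ μ).Nonempty)
    (G : (Fin n → ℝ) → ℝ)
    (hGusc : UpperSemicontinuousOn G {s | ∀ i, 0 ≤ s i})
    (hGbdd : ∃ C : ℝ, ∀ s, |G s| ≤ C) :
    (⨆ π ∈ PiMu s₀ μ,
        ⨅ (D : Dyn n) (_ : D.Nonneg) (_ : ∀ j, Continuous (D.pos j))
          (_ : ∀ j, HasCompactSupport (D.pos j)),
          ((∫ ω, (G (tailCoords ω) - D.gains ω) ∂π : ℝ) : EReal)) =
      (⨆ Q ∈ MSet s₀ μ, ((∫ ω, G (tailCoords ω) ∂Q : ℝ) : EReal)) ∧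
    ∀ π ∈ PiMu s₀ μ, π ∉ MSet s₀ μ →
      (⨅ (D : Dyn n) (_ : D.Nonneg) (_ : ∀ j, Continuous (D.pos j))
          (_ : ∀ j, HasCompactSupport (D.pos j)),
          ((∫ ω, (G (tailCoords ω) - D.gains ω) ∂π : ℝ) : EReal)) = ⊥ :=
  reduction_to_supermartingales_general μ hmom G hGusc hGbdd

end RobustFin
end
end

section
/- Approximation from above of bounded continuous functions by put portfolios: Let μ be a Borel probability measure on ℝ₊ with finite first moment, f : ℝ₊ → ℝ continuous and bounded, and ε > 0. Then there exist m ∈ ℕ, real numbers a₀, a₁,…,a_m and strikes K₁,…,K_m ≥ 0 such that the function u(s) = a₀ + Σ_{j=1}^m a_j (K_j − s)⁺ satisfies u(s) ≥ f(s) for all s ∈ ℝ₊ and ∫ (u − f) dμ < ε. -/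
open MeasureTheory Set Filter Topology
open scoped ENNReal NNReal Classical

noncomputable section

namespace RobustFin

/-!
Interpolate `f + η/2` linearly on a fine grid of `[0, R + 1]` and continue with the constant
upper bound `C` of `f`. Each linear piece is a normalized put spread, so the interpolant is a put
portfolio; by uniform continuity of `f` on `[0, R + 1]` it lies above `f` and within `η` of `f`
on `[0, R)`. Letting `η → 0` and `R → ∞` gives put portfolios converging to `f` from above,
pointwise on `ℝ₊` and under a uniform bound, so `∫ (u - f) dμ → 0` by dominated convergence.
-/

def IsPutPortfolio (u : ℝ → ℝ) : Prop :=
  ∃ (m : ℕ) (a₀ : ℝ) (a : Fin m → ℝ) (Ks : Fin m → ℝ),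
    (∀ j, 0 ≤ Ks j) ∧ u = fun s => a₀ + ∑ j, a j * max (Ks j - s) 0

theorem isPutPortfolio_const (c : ℝ) : IsPutPortfolio fun _ => c :=
  ⟨0, c, Fin.elim0, Fin.elim0, fun j => j.elim0, by simp⟩

theorem isPutPortfolio_put {K : ℝ} (hK : 0 ≤ K) : IsPutPortfolio fun s => max (K - s) 0 :=
  ⟨1, 0, fun _ => 1, fun _ => K, fun _ => hK, by simp⟩

namespace IsPutPortfolio

variable {u v : ℝ → ℝ}

theorem continuous (hu : IsPutPortfolio u) : Continuous u := by
  obtain ⟨m, a₀, a, Ks, -, rfl⟩ := hu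
  fun_prop

theorem add (hu : IsPutPortfolio u) (hv : IsPutPortfolio v) : IsPutPortfolio (u + v) := by
  obtain ⟨m, a₀, a, Ks, hKs, rfl⟩ := hu
  obtain ⟨m', b₀, b, Ks', hKs', rfl⟩ := hv
  refine ⟨m + m', a₀ + b₀, Fin.append a b, Fin.append Ks Ks',
    Fin.addCases (by simpa using hKs) (by simpa using hKs'), ?_⟩
  ext s
  simp only [Pi.add_apply, Fin.sum_univ_add, Fin.append_left, Fin.append_right]
  ring

theorem const_mul (hu : IsPutPortfolio u) (c : ℝ) : IsPutPortfolio fun s => c * u s := by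
  obtain ⟨m, a₀, a, Ks, hKs, rfl⟩ := hu
  refine ⟨m, c * a₀, fun j => c * a j, Ks, hKs, ?_⟩
  ext s
  simp only [mul_add, Finset.mul_sum, mul_assoc]

end IsPutPortfolio

theorem isPutPortfolio_sum {ι : Type*} (t : Finset ι) {g : ι → ℝ → ℝ}
    (hg : ∀ i ∈ t, IsPutPortfolio (g i)) : IsPutPortfolio (∑ i ∈ t, g i) :=
  Finset.sum_induction g IsPutPortfolio (fun _ _ => IsPutPortfolio.add)
    (isPutPortfolio_const 0) hg

def putSpread (K h s : ℝ) : ℝ := (max (K + h - s) 0 - max (K - s) 0) / h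

theorem isPutPortfolio_putSpread {K h : ℝ} (hK : 0 ≤ K) (hh : 0 ≤ h) :
    IsPutPortfolio (putSpread K h) := by
  have hspread : putSpread K h = fun s => h⁻¹ * (max (K + h - s) 0 + -1 * max (K - s) 0) := by
    ext s; rw [putSpread]; ring
  rw [hspread]
  exact (((isPutPortfolio_put (by linarith)).add ((isPutPortfolio_put hK).const_mul (-1))).const_mul
    h⁻¹)

theorem putSpread_of_le {K h s : ℝ} (hh : 0 < h) (hs : s ≤ K) : putSpread K h s = 1 := by
  rw [putSpread, max_eq_left (by linarith), max_eq_left (by linarith)]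
  field_simp
  ring

theorem putSpread_of_ge {K h s : ℝ} (hh : 0 ≤ h) (hs : K + h ≤ s) : putSpread K h s = 0 := by
  rw [putSpread, max_eq_right (by linarith), max_eq_right (by linarith)]
  simp

theorem putSpread_mem_Icc {K h : ℝ} (hh : 0 < h) (s : ℝ) : putSpread K h s ∈ Icc 0 1 := by
  rw [putSpread, mem_Icc, div_nonneg_iff, div_le_one hh]
  constructor
  · exact Or.inl ⟨by simp only [sub_nonneg]; gcongr; linarith, hh.le⟩
  · rw [sub_le_iff_le_add']
    exact max_le (by linarith [le_max_left (K - s) 0]) (by positivity)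

/-- The piecewise linear interpolation of `v` at the nodes `j * h`, `j ≤ n`, continued by the
constant `v n` beyond `n * h` (Abel summation of the spreads). -/
def putInterp (v : ℕ → ℝ) (h : ℝ) (n : ℕ) (s : ℝ) : ℝ :=
  v n + ∑ j ∈ Finset.range n, (v j - v (j + 1)) * putSpread (j * h) h s

section putInterp

variable {v : ℕ → ℝ} {h : ℝ}

theorem isPutPortfolio_putInterp (hh : 0 ≤ h) (n : ℕ) : IsPutPortfolio (putInterp v h n) := by
  have hsum : putInterp v h n = (fun _ => v n) +
      ∑ j ∈ Finset.range n, fun s => (v j - v (j + 1)) * putSpread (j * h) h s := by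
    ext s; simp [putInterp, Finset.sum_apply]
  rw [hsum]
  exact (isPutPortfolio_const _).add (isPutPortfolio_sum _ fun j _ =>
    (isPutPortfolio_putSpread (by positivity) hh).const_mul _)

theorem putInterp_succ (n : ℕ) (s : ℝ) :
    putInterp v h (n + 1) s =
      putInterp v h n s + (v n - v (n + 1)) * (putSpread (n * h) h s - 1) := by
  simp only [putInterp, Finset.sum_range_succ]
  ring

theorem putInterp_of_le (hh : 0 ≤ h) {n : ℕ} {s : ℝ} (hs : n * h ≤ s) :
    putInterp v h n s = v n := by
  rw [putInterp, add_eq_left]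
  refine Finset.sum_eq_zero fun j hj => ?_
  have hjn : (j : ℝ) + 1 ≤ n := by exact_mod_cast Finset.mem_range.mp hj
  rw [putSpread_of_ge hh (by nlinarith), mul_zero]

theorem putInterp_eq_of_mem_Icc (hh : 0 < h) {i n : ℕ} (hin : i < n) {s : ℝ}
    (hs : s ∈ Icc (i * h) ((i + 1) * h)) :
    putInterp v h n s = v (i + 1) + (v i - v (i + 1)) * putSpread (i * h) h s := by
  induction n, hin using Nat.le_induction with
  | base =>
    rw [putInterp_succ, putInterp_of_le hh.le hs.1]
    ring
  | succ n hin ih =>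
    have hsn : s ≤ n * h := hs.2.trans (by gcongr; exact_mod_cast hin)
    rw [putInterp_succ, ih, putSpread_of_le hh hsn]
    ring

theorem putInterp_mem_of_mem_Icc (hh : 0 < h) {i n : ℕ} (hin : i < n) {s : ℝ}
    (hs : s ∈ Icc (i * h) ((i + 1) * h)) {I : Set ℝ} (hI : Convex ℝ I) (hvi : v i ∈ I)
    (hvi' : v (i + 1) ∈ I) : putInterp v h n s ∈ I := by
  obtain ⟨hθ₀, hθ₁⟩ := putSpread_mem_Icc (K := i * h) hh s
  convert hI hvi hvi' hθ₀ (sub_nonneg.mpr hθ₁) (add_sub_cancel _ _) using 1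
  rw [putInterp_eq_of_mem_Icc hh hin hs, smul_eq_mul, smul_eq_mul]
  ring

end putInterp

theorem exists_grid_index {h s : ℝ} (hh : 0 < h) (hs : 0 ≤ s) :
    ∃ i : ℕ, (i : ℝ) * h ≤ s ∧ s < (i + 1) * h := by
  refine ⟨⌊s / h⌋₊, ?_, ?_⟩
  · rw [← le_div_iff₀ hh]; exact Nat.floor_le (by positivity)
  · rw [← div_lt_iff₀ hh]; exact Nat.lt_floor_add_one _

theorem exists_isPutPortfolio_approx {f : ℝ → ℝ} (hf : ContinuousOn f (Ici 0)) {C : ℝ}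
    (hC : ∀ x, 0 ≤ x → f x ≤ C) {η R : ℝ} (hη : 0 < η) (hR : 0 ≤ R) :
    ∃ u, IsPutPortfolio u ∧
      ∀ s, 0 ≤ s → f s ≤ u s ∧ u s ≤ C + η ∧ (s < R → u s ≤ f s + η) := by
  set M := R + 1
  obtain ⟨δ, hδ, hfδ⟩ := Metric.uniformContinuousOn_iff.mp
    ((isCompact_Icc (a := 0) (b := M)).uniformContinuousOn_of_continuous
      (hf.mono Icc_subset_Ici_self)) (η / 2) (half_pos hη)
  obtain ⟨n, hn⟩ := exists_nat_gt (M / min δ 1)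
  have hn₀ : (0 : ℝ) < n := lt_trans (by positivity) hn
  set h := M / n
  have hh : 0 < h := by positivity
  have hnh : n * h = M := by simp only [h]; field_simp
  have hhδ : h < min δ 1 := by
    rw [div_lt_iff₀ hn₀, mul_comm]; rwa [div_lt_iff₀ (by positivity)] at hn
  -- the last node carries `C`, which keeps the interpolant above `f` beyond the grid
  set v : ℕ → ℝ := fun j => if j < n then f (j * h) + η / 2 else C
  have hgrid : ∀ j ≤ n, ∀ s ∈ Icc 0 M, |s - j * h| ≤ h →
      f s ≤ v j ∧ v j ≤ C + η ∧ (j < n → v j ≤ f s + η) := by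
    intro j hjn s hs hsj
    by_cases hj : j < n
    · have hjM : (j : ℝ) * h ∈ Icc 0 M := ⟨by positivity, hnh ▸ by gcongr⟩
      have := hfδ s hs _ hjM (by rw [Real.dist_eq]; linarith [min_le_left δ 1])
      rw [Real.dist_eq, abs_lt] at this
      simp only [v, if_pos hj]
      refine ⟨by linarith, ?_, fun _ => by linarith⟩
      linarith [hC s hs.1]
    · simp only [v, if_neg hj]
      exact ⟨hC s hs.1, by linarith, fun hj' => absurd hj' hj⟩
  refine ⟨putInterp v h n, isPutPortfolio_putInterp hh.le n, fun s hs => ?_⟩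
  rcases lt_or_ge s M with hsM | hsM
  · obtain ⟨i, hi, hi'⟩ := exists_grid_index hh hs
    have hin : i < n := by
      have : (i : ℝ) < n := by nlinarith
      exact_mod_cast this
    have hsIcc : s ∈ Icc (i * h) ((i + 1) * h) := ⟨hi, hi'.le⟩
    have hsM' : s ∈ Icc 0 M := ⟨hs, hsM.le⟩
    obtain ⟨hvi, hvi_le, hvi_le'⟩ := hgrid i hin.le s hsM'
      (by rw [abs_le]; constructor <;> linarith)
    obtain ⟨hvi', hvi'_le, hvi'_le'⟩ := hgrid (i + 1) hin s hsM'
      (by rw [abs_le]; push_cast; constructor <;> linarith)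
    obtain ⟨hlower, hupper⟩ := putInterp_mem_of_mem_Icc hh hin hsIcc (convex_Icc (f s) (C + η))
      ⟨hvi, hvi_le⟩ ⟨hvi', hvi'_le⟩
    refine ⟨hlower, hupper, fun hsR => ?_⟩
    have hin' : i + 1 < n := by
      have : (i : ℝ) + 1 < n := by nlinarith [min_le_right δ 1]
      exact_mod_cast this
    exact (putInterp_mem_of_mem_Icc hh hin hsIcc (convex_Icc (f s) (f s + η))
      ⟨hvi, hvi_le' hin⟩ ⟨hvi', hvi'_le' hin'⟩).2
  · have hsR : ¬ s < R := by linarith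
    rw [putInterp_of_le hh.le (hnh ▸ hsM)]
    simp only [v, lt_irrefl, if_false]
    exact ⟨hC s hs, by linarith, fun hs' => absurd hs' hsR⟩

theorem exists_seq_isPutPortfolio_tendsto {f : ℝ → ℝ} (hf : ContinuousOn f (Ici 0)) {C : ℝ}
    (hC : ∀ x, 0 ≤ x → f x ≤ C) :
    ∃ u : ℕ → ℝ → ℝ, (∀ k, IsPutPortfolio (u k)) ∧
      (∀ k s, 0 ≤ s → f s ≤ u k s ∧ u k s ≤ C + 1) ∧
      ∀ s, 0 ≤ s → Tendsto (fun k => u k s) atTop (𝓝 (f s)) := by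
  choose u hu hbound using fun k : ℕ =>
    exists_isPutPortfolio_approx hf hC (η := 1 / (k + 1)) (R := k) (by positivity) k.cast_nonneg
  refine ⟨u, hu, fun k s hs => ⟨(hbound k s hs).1, ?_⟩, fun s hs => ?_⟩
  · have : 1 / ((k : ℝ) + 1) ≤ 1 := div_le_one_of_le₀ (by simp) (by positivity)
    linarith [(hbound k s hs).2.1]
  · have hlim : Tendsto (fun k : ℕ => f s + 1 / ((k : ℝ) + 1)) atTop (𝓝 (f s)) := by
      simpa using tendsto_const_nhds.add (tendsto_one_div_add_atTop_nhds_zero_nat (𝕜 := ℝ))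
    refine tendsto_of_tendsto_of_tendsto_of_le_of_le' tendsto_const_nhds hlim
      (Eventually.of_forall fun k => (hbound k s hs).1) ?_
    obtain ⟨k₀, hk₀⟩ := exists_nat_gt s
    filter_upwards [eventually_ge_atTop k₀] with k hk
    exact (hbound k s hs).2.2 (hk₀.trans_le (by exact_mod_cast hk))

theorem put_portfolio_approximation_general
    (μ : Measure ℝ) (hprob : IsProbabilityMeasure μ) (hsupp : μ (Set.Iio 0) = 0)
    (f : ℝ → ℝ) (hf : Continuous f) (hfb : ∃ C : ℝ, ∀ x, |f x| ≤ C)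
    (ε : ℝ) (hε : 0 < ε) :
    ∃ (m : ℕ) (a₀ : ℝ) (a : Fin m → ℝ) (Ks : Fin m → ℝ),
      (∀ j, 0 ≤ Ks j) ∧
      (∀ s : ℝ, 0 ≤ s → f s ≤ a₀ + ∑ j, a j * max (Ks j - s) 0) ∧
      ∫ x, ((a₀ + ∑ j, a j * max (Ks j - x) 0) - f x) ∂μ < ε := by
  obtain ⟨C, hC⟩ := hfb
  obtain ⟨u, hu, hbound, hlim⟩ := exists_seq_isPutPortfolio_tendsto hf.continuousOn
    (fun x _ => (le_abs_self _).trans (hC x))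
  have hnonneg : ∀ᵐ x ∂μ, 0 ≤ x :=
    ae_iff.mpr (measure_mono_null (fun x hx => not_le.mp hx) hsupp)
  have hint : Tendsto (fun k => ∫ x, (u k x - f x) ∂μ) atTop (𝓝 0) := by
    simpa using tendsto_integral_of_dominated_convergence (F := fun k x => u k x - f x)
      (f := fun _ => 0) (fun _ => 2 * C + 1)
      (fun k => ((hu k).continuous.sub hf).aestronglyMeasurable) (integrable_const _)
      (fun k => hnonneg.mono fun x hx => by
        have := hbound k x hx
        rw [Real.norm_eq_abs, abs_of_nonneg (by linarith)]
        linarith [neg_abs_le (f x), hC x])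
      (hnonneg.mono fun x hx => by simpa using (hlim x hx).sub_const (f x))
  obtain ⟨k, hk⟩ := (hint.eventually (gt_mem_nhds hε)).exists
  obtain ⟨m, a₀, a, Ks, hKs, hu_eq⟩ := hu k
  have hbound_k := hbound k
  rw [hu_eq] at hk hbound_k
  exact ⟨m, a₀, a, Ks, hKs, fun s hs => (hbound_k s hs).1, hk⟩

/-- approximation from above of bounded continuous functions by
put portfolios: for a probability measure `μ` on `ℝ₊` with finite first moment,
any bounded continuous `f` and `ε > 0`, there is a put portfolio
`u(s) = a₀ + Σ a_j (K_j − s)⁺` with `u ≥ f` on `ℝ₊` and `∫ (u − f) dμ < ε`. -/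
theorem put_portfolio_approximation
    (μ : Measure ℝ) (hprob : IsProbabilityMeasure μ) (hsupp : μ (Set.Iio 0) = 0)
    (hmom : Integrable (fun x => x) μ)
    (f : ℝ → ℝ) (hf : Continuous f) (hfb : ∃ C : ℝ, ∀ x, |f x| ≤ C)
    (ε : ℝ) (hε : 0 < ε) :
    ∃ (m : ℕ) (a₀ : ℝ) (a : Fin m → ℝ) (Ks : Fin m → ℝ),
      (∀ j, 0 ≤ Ks j) ∧
      (∀ s : ℝ, 0 ≤ s → f s ≤ a₀ + ∑ j, a j * max (Ks j - s) 0) ∧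
      ∫ x, ((a₀ + ∑ j, a j * max (Ks j - x) 0) - f x) ∂μ < ε :=
  put_portfolio_approximation_general μ hprob hsupp f hf hfb ε hε

end RobustFin
end
end
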